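/- arXiv:1906.02431 — 6 statements merged into one kernel-verified Lean document; each statement's English description precedes it below -/
import Mathlib

section
/- Suppose Assumption (A) holds and that the strip is asymptotically flat: (k·Θ)(s) → 0 and |Θ'(s)| → 0 as |s| → ∞. Then for every ε ∈ (0,E₁) there exists s₀ > 0 such that every ψ ∈ C_c^∞(Ω₀) whose support is contained in {(s,t) : |s| > s₀} satisfies h[ψ] ≥ (E₁ − ε)‖ψ‖_H². (This is the variational content of the lower bound inf σ_ess(H) ≥ E₁.) -/
set_option maxHeartbeats 1000000


open MeasureTheory Real Set Filter

noncomputable section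

/-- The geodesic-curvature scalar `k·Θ`. -/
def kdot (n : ℕ) (k Θ : ℝ → Fin n → ℝ) (s : ℝ) : ℝ := ∑ j, k s j * Θ s j

/-- `|Θ'(s)|²`. -/
def twistSq (n : ℕ) (Θ : ℝ → Fin n → ℝ) (s : ℝ) : ℝ :=
  ∑ j, (deriv (fun u => Θ u j) s) ^ 2

/-- The Jacobian `f(s,t) = √((1 - t k(s)·Θ(s))² + t² |Θ'(s)|²)`. -/
def fJac (n : ℕ) (k Θ : ℝ → Fin n → ℝ) (s t : ℝ) : ℝ :=
  Real.sqrt ((1 - t * kdot n k Θ s) ^ 2 + t ^ 2 * twistSq n Θ s)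

/-- The straight strip `Ω₀ = ℝ × (-a, a)`. -/
def strip0 (a : ℝ) : Set (ℝ × ℝ) := Set.univ ×ˢ Set.Ioo (-a) a

/-- First partial derivative `∂₁ψ`. -/
def pd1 (ψ : ℝ × ℝ → ℂ) (p : ℝ × ℝ) : ℂ := deriv (fun u => ψ (u, p.2)) p.1

/-- Second partial derivative `∂₂ψ`. -/
def pd2 (ψ : ℝ × ℝ → ℂ) (p : ℝ × ℝ) : ℂ := deriv (fun v => ψ (p.1, v)) p.2

/-- The quadratic form `h[ψ]`. -/
def formH (n : ℕ) (a : ℝ) (k Θ : ℝ → Fin n → ℝ) (ψ : ℝ × ℝ → ℂ) : ℝ :=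
  ∫ p in strip0 a,
    (‖pd1 ψ p‖ ^ 2 / fJac n k Θ p.1 p.2 + ‖pd2 ψ p‖ ^ 2 * fJac n k Θ p.1 p.2)

/-- `‖ψ‖_H²`. -/
def normHsq (n : ℕ) (a : ℝ) (k Θ : ℝ → Fin n → ℝ) (ψ : ℝ × ℝ → ℂ) : ℝ :=
  ∫ p in strip0 a, ‖ψ p‖ ^ 2 * fJac n k Θ p.1 p.2

/-- `ψ ∈ C_c^∞(Ω₀)`. -/
def IsTest (a : ℝ) (ψ : ℝ × ℝ → ℂ) : Prop :=
  ContDiff ℝ (⊤ : ℕ∞) ψ ∧ HasCompactSupport ψ ∧ tsupport ψ ⊆ strip0 a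

/- ### Auxiliary lemmas -/

open intervalIntegral in
lemma poincare1d_real (a b' : ℝ) (ha : 0 < a) (hb'0 : 0 ≤ b') (hb'a : b' < a)
    (g : ℝ → ℝ) (hg : ContDiff ℝ (⊤ : ℕ∞) g) (hsupp : ∀ t, b' < |t| → g t = 0) :
    (π / (2 * a)) ^ 2 * ∫ t in Ioo (-a) a, (g t) ^ 2 ≤ ∫ t in Ioo (-a) a, (deriv g t) ^ 2 := by
  have hπ := Real.pi_pos
  set c := π / (2 * a) with hc_def
  have hc : 0 < c := by positivity
  set b := (b' + a) / 2 with hb_def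
  have hb0 : 0 < b := by simp only [hb_def]; linarith
  have hbb' : b' < b := by simp only [hb_def]; linarith
  have hba : b < a := by simp only [hb_def]; linarith
  have hca : c * a = π / 2 := by rw [hc_def]; field_simp
  have hcb : c * b < π / 2 := by
    rw [← hca]; exact (mul_lt_mul_iff_right₀ hc).2 hba
  have hcos : ∀ t ∈ Icc (-b) b, 0 < Real.cos (c * t) := by
    intro t ht
    apply Real.cos_pos_of_mem_Ioo
    constructor
    · have : c * t ≥ c * (-b) := (mul_le_mul_iff_right₀ hc).2 ht.1
      have : c * (-b) = -(c * b) := by ring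
      nlinarith
    · nlinarith [(mul_le_mul_iff_right₀ hc).2 ht.2]
  set w : ℝ → ℝ := fun t => -c * Real.tan (c * t) with hw_def
  have hgd : ∀ t, HasDerivAt g (deriv g t) t :=
    fun t => ((hg.differentiable (by simp)) t).hasDerivAt
  have hgc : Continuous g := hg.continuous
  have hgdc : Continuous (deriv g) := hg.continuous_deriv (by simp)
  have hw : ∀ t ∈ Icc (-b) b, HasDerivAt w (-(c ^ 2 + (w t) ^ 2)) t := by
    intro t ht
    have hct := (hcos t ht).ne'
    have h1 : HasDerivAt (fun u : ℝ => c * u) c t := by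
      simpa using (hasDerivAt_id t).const_mul c
    have h2 : HasDerivAt Real.tan (1 / Real.cos (c * t) ^ 2) (c * t) :=
      Real.hasDerivAt_tan hct
    have h3 : HasDerivAt (fun u => Real.tan (c * u)) (1 / Real.cos (c * t) ^ 2 * c) t :=
      h2.comp t h1
    have h4 : HasDerivAt (fun y => -c * Real.tan (c * y)) (-c * (1 / Real.cos (c * t) ^ 2 * c)) t :=
      h3.const_mul (-c)
    convert h4 using 1
    have hcos2 : Real.cos (c * t) ^ 2 ≠ 0 := pow_ne_zero _ hct
    show -(c ^ 2 + (-c * Real.tan (c * t)) ^ 2) = _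
    simp only [Real.tan_eq_sin_div_cos]
    field_simp
    nlinarith [Real.sin_sq_add_cos_sq (c * t)]
  have hwcont : ContinuousOn w (Icc (-b) b) := by
    intro t ht
    have : ContinuousAt (fun u => Real.tan (c * u)) t := by
      exact (Real.continuousAt_tan.2 (hcos t ht).ne').comp
        ((continuous_const.mul continuous_id).continuousAt)
    exact ContinuousAt.continuousWithinAt (continuousAt_const.mul this)
  set F : ℝ → ℝ := fun t => w t * g t ^ 2 with hF_def
  set F' : ℝ → ℝ := fun t =>
    -(c ^ 2 + w t ^ 2) * g t ^ 2 + w t * (2 * g t * deriv g t) with hF'_def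
  have hbneg : -b ≤ b := by linarith
  have huIcc : uIcc (-b) b = Icc (-b) b := uIcc_of_le hbneg
  have hF : ∀ t ∈ uIcc (-b) b, HasDerivAt F (F' t) t := by
    intro t ht
    rw [huIcc] at ht
    have hg2 : HasDerivAt (fun u => g u ^ 2) (2 * g t * deriv g t) t := by
      have := (hgd t).fun_pow 2
      simpa [mul_comm, mul_assoc, mul_left_comm] using this
    exact (hw t ht).mul hg2
  have hF'cont : ContinuousOn F' (Icc (-b) b) := by
    apply ContinuousOn.add
    · exact (((continuousOn_const.add (hwcont.pow 2)).neg).mul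
        ((hgc.continuousOn).pow 2))
    · exact hwcont.mul (((continuous_const.mul hgc).mul hgdc).continuousOn)
  have hF'int : IntervalIntegrable F' volume (-b) b := by
    apply ContinuousOn.intervalIntegrable
    rwa [huIcc]
  have hgb : g b = 0 := hsupp b (by rw [abs_of_pos hb0]; exact hbb')
  have hgnb : g (-b) = 0 := hsupp (-b) (by rw [abs_neg, abs_of_pos hb0]; exact hbb')
  have hFTC : ∫ t in (-b)..b, F' t = 0 := by
    rw [integral_eq_sub_of_hasDerivAt hF hF'int]
    simp [hF_def, hgb, hgnb]
  -- integrability of the pieces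
  have hint1 : IntervalIntegrable (fun t => (deriv g t) ^ 2) volume (-b) b :=
    (hgdc.pow 2).intervalIntegrable _ _
  have hint2 : IntervalIntegrable (fun t => (g t) ^ 2) volume (-b) b :=
    (hgc.pow 2).intervalIntegrable _ _
  have hexpand : ∀ t, (deriv g t - w t * g t) ^ 2
      = (deriv g t) ^ 2 - F' t - c ^ 2 * g t ^ 2 := by
    intro t; simp only [hF'_def]; ring
  have h0 : 0 ≤ ∫ t in (-b)..b, (deriv g t - w t * g t) ^ 2 :=
    intervalIntegral.integral_nonneg hbneg (fun t _ => sq_nonneg _)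
  have hsplit : ∫ t in (-b)..b, (deriv g t - w t * g t) ^ 2
      = (∫ t in (-b)..b, (deriv g t) ^ 2) - (∫ t in (-b)..b, F' t)
        - c ^ 2 * ∫ t in (-b)..b, (g t) ^ 2 := by
    rw [← intervalIntegral.integral_const_mul, ← intervalIntegral.integral_sub hint1 hF'int,
      ← intervalIntegral.integral_sub (hint1.sub hF'int) (hint2.const_mul _)]
    exact intervalIntegral.integral_congr (fun t _ => hexpand t)
  have hkey : c ^ 2 * ∫ t in (-b)..b, (g t) ^ 2 ≤ ∫ t in (-b)..b, (deriv g t) ^ 2 := by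
    rw [hsplit, hFTC] at h0; linarith
  -- derivative vanishes outside [-b', b']
  have hdzero : ∀ t, b' < |t| → deriv g t = 0 := by
    intro t ht
    have hopen : IsOpen {u : ℝ | b' < |u|} := isOpen_lt continuous_const continuous_abs
    have hev : g =ᶠ[nhds t] (fun _ => (0 : ℝ)) :=
      Filter.eventually_of_mem (hopen.mem_nhds ht) (fun u hu => hsupp u hu)
    rw [hev.deriv_eq]; simp
  -- convert set integrals
  have conv : ∀ h : ℝ → ℝ, (∀ t, b' < |t| → h t = 0) →
      (∫ t in Ioo (-a) a, h t) = ∫ t in (-b)..b, h t := by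
    intro h hh
    rw [intervalIntegral.integral_of_le hbneg]
    rw [setIntegral_eq_integral_of_forall_compl_eq_zero (fun t ht => ?_),
      setIntegral_eq_integral_of_forall_compl_eq_zero (fun t ht => ?_)]
    · apply hh
      by_contra hcon
      rw [not_lt, abs_le] at hcon
      exact ht (mem_Ioc.2 ⟨by linarith [hcon.1, hbb'], by linarith [hcon.2, hbb']⟩)
    · apply hh
      by_contra hcon
      rw [not_lt, abs_le] at hcon
      exact ht (mem_Ioo.2 ⟨by linarith [hcon.1, hb'a], by linarith [hcon.2, hb'a]⟩)
  rw [conv _ (fun t ht => by rw [hsupp t ht]; ring),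
    conv _ (fun t ht => by rw [hdzero t ht]; ring)]
  exact hkey


lemma normsq_complex (z : ℂ) : ‖z‖ ^ 2 = z.re ^ 2 + z.im ^ 2 := by
  rw [Complex.sq_norm, Complex.normSq_apply]; ring

lemma poincare1d_complex (a b' : ℝ) (ha : 0 < a) (hb'0 : 0 ≤ b') (hb'a : b' < a)
    (g : ℝ → ℂ) (hg : ContDiff ℝ (⊤ : ℕ∞) g) (hsupp : ∀ t, b' < |t| → g t = 0) :
    (π / (2 * a)) ^ 2 * ∫ t in Ioo (-a) a, ‖g t‖ ^ 2 ≤ ∫ t in Ioo (-a) a, ‖deriv g t‖ ^ 2 := by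
  set x : ℝ → ℝ := fun t => (g t).re with hx_def
  set y : ℝ → ℝ := fun t => (g t).im with hy_def
  have hx : ContDiff ℝ (⊤ : ℕ∞) x := Complex.reCLM.contDiff.comp hg
  have hy : ContDiff ℝ (⊤ : ℕ∞) y := Complex.imCLM.contDiff.comp hg
  have hdx : ∀ t, deriv x t = (deriv g t).re := by
    intro t
    have hgt : HasDerivAt g (deriv g t) t := ((hg.differentiable (by simp)) t).hasDerivAt
    exact (Complex.reCLM.hasFDerivAt.comp_hasDerivAt t hgt).deriv
  have hdy : ∀ t, deriv y t = (deriv g t).im := by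
    intro t
    have hgt : HasDerivAt g (deriv g t) t := ((hg.differentiable (by simp)) t).hasDerivAt
    exact (Complex.imCLM.hasFDerivAt.comp_hasDerivAt t hgt).deriv
  have hxs : ∀ t, b' < |t| → x t = 0 := fun t ht => by simp [hx_def, hsupp t ht]
  have hys : ∀ t, b' < |t| → y t = 0 := fun t ht => by simp [hy_def, hsupp t ht]
  have h1 := poincare1d_real a b' ha hb'0 hb'a x hx hxs
  have h2 := poincare1d_real a b' ha hb'0 hb'a y hy hys
  -- integrability on Ioo
  have hIoo : ∀ f : ℝ → ℝ, Continuous f → IntegrableOn f (Ioo (-a) a) volume := by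
    intro f hf
    exact ((hf.continuousOn).integrableOn_compact isCompact_Icc).mono_set Ioo_subset_Icc_self
  have e1 : (∫ t in Ioo (-a) a, ‖g t‖ ^ 2)
      = (∫ t in Ioo (-a) a, x t ^ 2) + ∫ t in Ioo (-a) a, y t ^ 2 := by
    rw [← integral_add (hIoo (fun t => x t ^ 2) ((hx.continuous).pow 2)) (hIoo (fun t => y t ^ 2) ((hy.continuous).pow 2))]
    exact setIntegral_congr_fun measurableSet_Ioo (fun t _ => normsq_complex (g t))
  have e2 : (∫ t in Ioo (-a) a, ‖deriv g t‖ ^ 2)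
      = (∫ t in Ioo (-a) a, (deriv x t) ^ 2) + ∫ t in Ioo (-a) a, (deriv y t) ^ 2 := by
    rw [← integral_add (hIoo (fun t => (deriv x t) ^ 2) ((hx.continuous_deriv (by simp)).pow 2))
      (hIoo (fun t => (deriv y t) ^ 2) ((hy.continuous_deriv (by simp)).pow 2))]
    refine setIntegral_congr_fun measurableSet_Ioo (fun t _ => ?_)
    rw [normsq_complex (deriv g t), hdx t, hdy t]
  rw [e1, e2]; linarith


lemma twistSq_nonneg (n : ℕ) (Θ : ℝ → Fin n → ℝ) (s : ℝ) : 0 ≤ twistSq n Θ s :=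
  Finset.sum_nonneg fun _ _ => sq_nonneg _

lemma fJac_bounds (n : ℕ) (k Θ : ℝ → Fin n → ℝ) (a δ s t : ℝ)
    (ha : 0 < a) (ht : |t| ≤ a) (hδ : 0 ≤ δ)
    (hκ : |kdot n k Θ s| ≤ δ) (hτ : Real.sqrt (twistSq n Θ s) ≤ δ) (haδ : a * δ ≤ 1) :
    1 - a * δ ≤ fJac n k Θ s t ∧ fJac n k Θ s t ≤ 1 + 2 * (a * δ) := by
  have hτ0 := twistSq_nonneg n Θ s
  have hτ2 : twistSq n Θ s ≤ δ ^ 2 := by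
    have := Real.sq_sqrt hτ0
    nlinarith [Real.sqrt_nonneg (twistSq n Θ s)]
  set κ := kdot n k Θ s with hκdef
  have h1 : |t * κ| ≤ a * δ := by
    rw [abs_mul]
    exact mul_le_mul ht hκ (abs_nonneg _) ha.le
  have habs := abs_le.1 h1
  have htabs := abs_le.1 ht
  constructor
  · have hlow : (1 - a * δ) ^ 2 ≤ (1 - t * κ) ^ 2 := by nlinarith
    have : (1 - a * δ) ^ 2 ≤ (1 - t * κ) ^ 2 + t ^ 2 * twistSq n Θ s := by
      nlinarith [sq_nonneg t, mul_nonneg (sq_nonneg t) hτ0]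
    calc 1 - a * δ = Real.sqrt ((1 - a * δ) ^ 2) := by
          rw [Real.sqrt_sq (by linarith)]
      _ ≤ fJac n k Θ s t := Real.sqrt_le_sqrt this
  · have hup : (1 - t * κ) ^ 2 + t ^ 2 * twistSq n Θ s ≤ (1 + 2 * (a * δ)) ^ 2 := by
      have ht2 : t ^ 2 ≤ a ^ 2 := by nlinarith
      have : t ^ 2 * twistSq n Θ s ≤ a ^ 2 * δ ^ 2 :=
        mul_le_mul ht2 hτ2 hτ0 (by positivity)
      nlinarith [mul_nonneg ha.le hδ]
    calc fJac n k Θ s t ≤ Real.sqrt ((1 + 2 * (a * δ)) ^ 2) := Real.sqrt_le_sqrt hup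
      _ = 1 + 2 * (a * δ) := Real.sqrt_sq (by nlinarith [mul_nonneg ha.le hδ])

lemma pd1_eq (ψ : ℝ × ℝ → ℂ) (hψ : ContDiff ℝ (⊤ : ℕ∞) ψ) (p : ℝ × ℝ) :
    pd1 ψ p = fderiv ℝ ψ p (1, 0) := by
  have hD : HasFDerivAt ψ (fderiv ℝ ψ p) (p.1, p.2) := by
    rw [Prod.mk.eta]; exact ((hψ.differentiable (by simp)) p).hasFDerivAt
  have h1 : HasDerivAt (fun u : ℝ => (u, p.2)) ((1 : ℝ), (0 : ℝ)) p.1 :=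
    HasDerivAt.prodMk (hasDerivAt_id p.1) (hasDerivAt_const p.1 p.2)
  exact (hD.comp_hasDerivAt p.1 h1).deriv

lemma pd2_eq (ψ : ℝ × ℝ → ℂ) (hψ : ContDiff ℝ (⊤ : ℕ∞) ψ) (p : ℝ × ℝ) :
    pd2 ψ p = fderiv ℝ ψ p (0, 1) := by
  have hD : HasFDerivAt ψ (fderiv ℝ ψ p) (p.1, p.2) := by
    rw [Prod.mk.eta]; exact ((hψ.differentiable (by simp)) p).hasFDerivAt
  have h1 : HasDerivAt (fun v : ℝ => (p.1, v)) ((0 : ℝ), (1 : ℝ)) p.2 :=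
    HasDerivAt.prodMk (hasDerivAt_const p.2 p.1) (hasDerivAt_id p.2)
  exact (hD.comp_hasDerivAt p.2 h1).deriv

lemma pd1_cont (ψ : ℝ × ℝ → ℂ) (hψ : ContDiff ℝ (⊤ : ℕ∞) ψ) : Continuous (pd1 ψ) := by
  have : pd1 ψ = fun p => fderiv ℝ ψ p (1, 0) := funext (pd1_eq ψ hψ)
  rw [this]
  exact (hψ.continuous_fderiv (by simp)).clm_apply continuous_const

lemma pd2_cont (ψ : ℝ × ℝ → ℂ) (hψ : ContDiff ℝ (⊤ : ℕ∞) ψ) : Continuous (pd2 ψ) := by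
  have : pd2 ψ = fun p => fderiv ℝ ψ p (0, 1) := funext (pd2_eq ψ hψ)
  rw [this]
  exact (hψ.continuous_fderiv (by simp)).clm_apply continuous_const

lemma pd1_zero (ψ : ℝ × ℝ → ℂ) (p : ℝ × ℝ) (hp : p ∉ tsupport ψ) : pd1 ψ p = 0 := by
  have hopen : IsOpen (tsupport ψ)ᶜ := (isClosed_tsupport ψ).isOpen_compl
  have hc : Continuous (fun u : ℝ => (u, p.2)) := continuous_id.prodMk continuous_const
  have hmem : (fun u : ℝ => (u, p.2)) ⁻¹' (tsupport ψ)ᶜ ∈ nhds p.1 := by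
    apply hc.continuousAt.preimage_mem_nhds
    rw [Prod.mk.eta]
    exact hopen.mem_nhds hp
  have hev : (fun u => ψ (u, p.2)) =ᶠ[nhds p.1] (fun _ => (0 : ℂ)) :=
    Filter.eventually_of_mem hmem (fun u hu => image_eq_zero_of_notMem_tsupport hu)
  unfold pd1
  rw [hev.deriv_eq, deriv_const]

lemma pd2_zero (ψ : ℝ × ℝ → ℂ) (p : ℝ × ℝ) (hp : p ∉ tsupport ψ) : pd2 ψ p = 0 := by
  have hopen : IsOpen (tsupport ψ)ᶜ := (isClosed_tsupport ψ).isOpen_compl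
  have hc : Continuous (fun v : ℝ => (p.1, v)) := continuous_const.prodMk continuous_id
  have hmem : (fun v : ℝ => (p.1, v)) ⁻¹' (tsupport ψ)ᶜ ∈ nhds p.2 := by
    apply hc.continuousAt.preimage_mem_nhds
    rw [Prod.mk.eta]
    exact hopen.mem_nhds hp
  have hev : (fun v => ψ (p.1, v)) =ᶠ[nhds p.2] (fun _ => (0 : ℂ)) :=
    Filter.eventually_of_mem hmem (fun v hv => image_eq_zero_of_notMem_tsupport hv)
  unfold pd2
  rw [hev.deriv_eq, deriv_const]

theorem asymptotically_flat_strip_essential_spectrum_lower_bound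
    (n : ℕ) (hn : 1 ≤ n) (a : ℝ) (ha : 0 < a)
    (Γ : ℝ → EuclideanSpace ℝ (Fin (n + 1)))
    (N : Fin n → ℝ → EuclideanSpace ℝ (Fin (n + 1)))
    (k Θ : ℝ → Fin n → ℝ)
    (hΓ : Differentiable ℝ Γ)
    (hT : LocallyLipschitz (deriv Γ))
    (hTunit : ∀ s, ‖deriv Γ s‖ = 1)
    (hNlip : ∀ j, LocallyLipschitz (N j))
    (hON : ∀ s : ℝ, Orthonormal ℝ
      (Fin.cons (deriv Γ s) (fun j => N j s) : Fin (n + 1) → EuclideanSpace ℝ (Fin (n + 1))))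
    (hkm : ∀ j, Measurable fun s => k s j)
    (hkb : ∀ r : ℝ, ∃ C : ℝ, ∀ s : ℝ, |s| ≤ r → ∀ j, |k s j| ≤ C)
    (hΘlip : ∀ j, ∃ L : NNReal, LipschitzWith L fun s => Θ s j)
    (hΘunit : ∀ s, ∑ j, Θ s j ^ 2 = 1)
    (hode : ∀ᵐ s ∂(volume : Measure ℝ),
      HasDerivAt (deriv Γ) (∑ j, k s j • N j s) s ∧
        ∀ j, HasDerivAt (N j) ((-k s j) • deriv Γ s) s)
    -- Assumption (A)
    (C : ℝ) (hC : ∀ᵐ s ∂(volume : Measure ℝ), |kdot n k Θ s| ≤ C) (haC : a * C < 1)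
    -- asymptotic flatness
    (hflat1 : Tendsto (fun s => kdot n k Θ s) (atBot ⊔ atTop) (nhds 0))
    (hflat2 : Tendsto (fun s => Real.sqrt (twistSq n Θ s)) (atBot ⊔ atTop) (nhds 0)) :
    ∀ ε : ℝ, 0 < ε → ε < (π / (2 * a)) ^ 2 →
      ∃ s₀ : ℝ, 0 < s₀ ∧ ∀ ψ : ℝ × ℝ → ℂ, IsTest a ψ →
        tsupport ψ ⊆ {p : ℝ × ℝ | s₀ < |p.1|} →
        ((π / (2 * a)) ^ 2 - ε) * normHsq n a k Θ ψ ≤ formH n a k Θ ψ := by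
  intro ε hε hεE
  have hπ := Real.pi_pos
  set E := (π / (2 * a)) ^ 2 with hE_def
  have hE : 0 < E := by positivity
  set δ : ℝ := min (ε / (3 * a * E)) (1 / (2 * a)) with hδ_def
  have hδpos : 0 < δ := lt_min (by positivity) (by positivity)
  have hδ1 : a * δ ≤ 1 / 2 := by
    have h := min_le_right (ε / (3 * a * E)) (1 / (2 * a))
    rw [← hδ_def] at h
    calc a * δ ≤ a * (1 / (2 * a)) := by nlinarith
      _ = 1 / 2 := by field_simp
  have hδ2 : 3 * a * E * δ ≤ ε := by
    have h := min_le_left (ε / (3 * a * E)) (1 / (2 * a))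
    rw [← hδ_def] at h
    have h3 : 0 < 3 * a * E := by positivity
    calc 3 * a * E * δ ≤ 3 * a * E * (ε / (3 * a * E)) := by nlinarith
      _ = ε := by field_simp
  -- pick s₀ using asymptotic flatness
  have hev : ∀ᶠ s in atBot ⊔ atTop,
      |kdot n k Θ s| ≤ δ ∧ Real.sqrt (twistSq n Θ s) ≤ δ := by
    have h1 : ∀ᶠ s in atBot ⊔ atTop, |kdot n k Θ s| ≤ δ := by
      have := Metric.tendsto_nhds.mp hflat1 δ hδpos
      filter_upwards [this] with s hs
      rw [Real.dist_eq, sub_zero] at hs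
      exact hs.le
    have h2 : ∀ᶠ s in atBot ⊔ atTop, Real.sqrt (twistSq n Θ s) ≤ δ := by
      have := Metric.tendsto_nhds.mp hflat2 δ hδpos
      filter_upwards [this] with s hs
      rw [Real.dist_eq, sub_zero] at hs
      exact (le_abs_self _).trans hs.le
    exact h1.and h2
  rw [Filter.eventually_sup] at hev
  obtain ⟨hbot, htop⟩ := hev
  obtain ⟨A, hA⟩ := Filter.eventually_atBot.1 hbot
  obtain ⟨B, hB⟩ := Filter.eventually_atTop.1 htop
  set s₀ : ℝ := max 1 (max (|A| + 1) (|B| + 1)) with hs₀_def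
  have hs₀pos : 0 < s₀ := lt_of_lt_of_le one_pos (le_max_left _ _)
  have hs₀ : ∀ s : ℝ, s₀ < |s| →
      |kdot n k Θ s| ≤ δ ∧ Real.sqrt (twistSq n Θ s) ≤ δ := by
    intro s hs
    rcases le_or_gt 0 s with h0 | h0
    · apply hB
      have h1 : |B| + 1 ≤ s₀ := le_trans (le_max_right _ _) (le_max_right _ _)
      rw [abs_of_nonneg h0] at hs
      linarith [le_abs_self B]
    · apply hA
      have h1 : |A| + 1 ≤ s₀ := le_trans (le_max_left _ _) (le_max_right _ _)
      rw [abs_of_neg h0] at hs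
      linarith [neg_abs_le A]
  refine ⟨s₀, hs₀pos, ?_⟩
  rintro ψ ⟨hψs, hψc, hψsupp⟩ hψfar
  -- notation
  set fb : ℝ × ℝ → ℝ := fun p => fJac n k Θ p.1 p.2 with hfb_def
  have hf0 : ∀ p, 0 ≤ fb p := fun p => Real.sqrt_nonneg _
  -- bounds on the support
  have hfS : ∀ p ∈ tsupport ψ, 1 - a * δ ≤ fb p ∧ fb p ≤ 1 + 2 * (a * δ) := by
    intro p hp
    have hfar := hψfar hp
    have hstrip := hψsupp hp
    rw [strip0, Set.mem_prod] at hstrip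
    have ht : |p.2| ≤ a := by
      have := hstrip.2
      rw [Set.mem_Ioo] at this
      rw [abs_le]; exact ⟨this.1.le, this.2.le⟩
    obtain ⟨hκ, hτ⟩ := hs₀ p.1 hfar
    exact fJac_bounds n k Θ a δ p.1 p.2 ha ht hδpos.le hκ hτ (by linarith)
  -- measurability of fb
  have hκm : Measurable (kdot n k Θ) := by
    apply Finset.measurable_sum
    intro j _
    exact (hkm j).mul (hΘlip j).choose_spec.continuous.measurable
  have hτm : Measurable (twistSq n Θ) := by
    apply Finset.measurable_sum
    intro j _
    exact (measurable_deriv _).pow_const 2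
  have hfm : Measurable fb := by
    apply Measurable.sqrt
    exact ((measurable_const.sub (measurable_snd.mul (hκm.comp measurable_fst))).pow_const
      2).add ((measurable_snd.pow_const 2).mul (hτm.comp measurable_fst))
  -- continuity and compact support of the pieces
  have hG0c : Continuous (fun p => ‖ψ p‖ ^ 2) := (hψs.continuous.norm).pow 2
  have hG1c : Continuous (fun p => ‖pd1 ψ p‖ ^ 2) := ((pd1_cont ψ hψs).norm).pow 2
  have hG2c : Continuous (fun p => ‖pd2 ψ p‖ ^ 2) := ((pd2_cont ψ hψs).norm).pow 2
  have hG0cs : HasCompactSupport (fun p => ‖ψ p‖ ^ 2) := by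
    apply HasCompactSupport.intro hψc
    intro p hp
    rw [image_eq_zero_of_notMem_tsupport hp]; simp
  have hG1cs : HasCompactSupport (fun p => ‖pd1 ψ p‖ ^ 2) := by
    apply HasCompactSupport.intro hψc
    intro p hp
    rw [pd1_zero ψ p hp]; simp
  have hG2cs : HasCompactSupport (fun p => ‖pd2 ψ p‖ ^ 2) := by
    apply HasCompactSupport.intro hψc
    intro p hp
    rw [pd2_zero ψ p hp]; simp
  -- integrability
  have hG0i : IntegrableOn (fun p => ‖ψ p‖ ^ 2) (strip0 a) volume :=
    (hG0c.integrable_of_hasCompactSupport hG0cs).restrict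
  have hG1i : IntegrableOn (fun p => ‖pd1 ψ p‖ ^ 2) (strip0 a) volume :=
    (hG1c.integrable_of_hasCompactSupport hG1cs).restrict
  have hG2i : IntegrableOn (fun p => ‖pd2 ψ p‖ ^ 2) (strip0 a) volume :=
    (hG2c.integrable_of_hasCompactSupport hG2cs).restrict
  have hG0fi : IntegrableOn (fun p => ‖ψ p‖ ^ 2 * fb p) (strip0 a) volume := by
    apply Integrable.mono' (hG0i.const_mul (1 + 2 * (a * δ)))
    · exact ((hG0c.measurable.mul hfm).aestronglyMeasurable)
    · apply Filter.Eventually.of_forall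
      intro p
      by_cases hp : p ∈ tsupport ψ
      · rw [Real.norm_eq_abs, abs_of_nonneg (mul_nonneg (sq_nonneg _) (hf0 p))]
        nlinarith [(hfS p hp).2, sq_nonneg ‖ψ p‖, hf0 p]
      · rw [image_eq_zero_of_notMem_tsupport hp]; simp
  have hG2fi : IntegrableOn (fun p => ‖pd2 ψ p‖ ^ 2 * fb p) (strip0 a) volume := by
    apply Integrable.mono' (hG2i.const_mul (1 + 2 * (a * δ)))
    · exact ((hG2c.measurable.mul hfm).aestronglyMeasurable)
    · apply Filter.Eventually.of_forall
      intro p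
      by_cases hp : p ∈ tsupport ψ
      · rw [Real.norm_eq_abs, abs_of_nonneg (mul_nonneg (sq_nonneg _) (hf0 p))]
        nlinarith [(hfS p hp).2, sq_nonneg ‖pd2 ψ p‖, hf0 p]
      · rw [pd2_zero ψ p hp]; simp
  have hG1fi : IntegrableOn (fun p => ‖pd1 ψ p‖ ^ 2 / fb p) (strip0 a) volume := by
    apply Integrable.mono' (hG1i.const_mul 2)
    · exact ((hG1c.measurable.div hfm).aestronglyMeasurable)
    · apply Filter.Eventually.of_forall
      intro p
      by_cases hp : p ∈ tsupport ψ
      · have hfp : (0 : ℝ) < fb p := by linarith [(hfS p hp).1, hδ1]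
        rw [Real.norm_eq_abs, abs_of_nonneg (div_nonneg (sq_nonneg _) hfp.le),
          div_le_iff₀ hfp]
        nlinarith [(hfS p hp).1, sq_nonneg ‖pd1 ψ p‖, hδ1]
      · rw [pd1_zero ψ p hp]; simp
  -- Step 1 : drop the first term of formH
  have step1 : ∫ p in strip0 a, ‖pd2 ψ p‖ ^ 2 * fb p ≤ formH n a k Θ ψ := by
    rw [formH]
    apply integral_mono hG2fi (hG1fi.add hG2fi)
    intro p
    exact le_add_of_nonneg_left (div_nonneg (sq_nonneg _) (hf0 p))
  -- Step 2 : compare with the flat metric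
  have hstripm : MeasurableSet (strip0 a) := MeasurableSet.univ.prod measurableSet_Ioo
  have step2 : (1 - a * δ) * ∫ p in strip0 a, ‖pd2 ψ p‖ ^ 2
      ≤ ∫ p in strip0 a, ‖pd2 ψ p‖ ^ 2 * fb p := by
    rw [← integral_const_mul]
    apply setIntegral_mono_on (hG2i.const_mul _) hG2fi hstripm
    intro p _
    by_cases hp : p ∈ tsupport ψ
    · nlinarith [(hfS p hp).1, sq_nonneg ‖pd2 ψ p‖]
    · rw [pd2_zero ψ p hp]; simp
  have step2' : ∫ p in strip0 a, ‖ψ p‖ ^ 2 * fb p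
      ≤ (1 + 2 * (a * δ)) * ∫ p in strip0 a, ‖ψ p‖ ^ 2 := by
    rw [← integral_const_mul]
    apply setIntegral_mono_on hG0fi (hG0i.const_mul _) hstripm
    intro p _
    by_cases hp : p ∈ tsupport ψ
    · nlinarith [(hfS p hp).2, sq_nonneg ‖ψ p‖, hf0 p]
    · rw [image_eq_zero_of_notMem_tsupport hp]; simp
  -- Step 3 : Fubini and the 1D Poincaré inequality
  have step3 : E * ∫ p in strip0 a, ‖ψ p‖ ^ 2 ≤ ∫ p in strip0 a, ‖pd2 ψ p‖ ^ 2 := by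
    -- support in the t-direction
    by_cases hSempty : tsupport ψ = ∅
    · have hψ0 : ∀ p, ψ p = 0 := fun p =>
        image_eq_zero_of_notMem_tsupport (by simp [hSempty])
      have h2 : ∀ p, pd2 ψ p = 0 := fun p => pd2_zero ψ p (by simp [hSempty])
      simp only [hψ0, h2]
      simp
    · obtain ⟨p₀, hp₀⟩ := Set.nonempty_iff_ne_empty.2 hSempty
      obtain ⟨pm, hpmS, hmax⟩ := hψc.exists_isMaxOn ⟨p₀, hp₀⟩
        ((continuous_snd.abs).continuousOn)
      set b' : ℝ := |pm.2| with hb'_def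
      have hb'0 : 0 ≤ b' := abs_nonneg _
      have hb'a : b' < a := by
        have hstrip := hψsupp hpmS
        rw [strip0, Set.mem_prod, Set.mem_Ioo] at hstrip
        rw [hb'_def, abs_lt]
        exact ⟨hstrip.2.1, hstrip.2.2⟩
      have hSb' : ∀ p ∈ tsupport ψ, |p.2| ≤ b' := fun p hp => hmax hp
      -- slice inequality
      have hslice : ∀ s : ℝ, E * ∫ t in Ioo (-a) a, ‖ψ (s, t)‖ ^ 2
          ≤ ∫ t in Ioo (-a) a, ‖pd2 ψ (s, t)‖ ^ 2 := by
        intro s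
        have hg : ContDiff ℝ (⊤ : ℕ∞) (fun v => ψ (s, v)) :=
          hψs.comp (contDiff_const.prodMk contDiff_id)
        have hsupp : ∀ t, b' < |t| → ψ (s, t) = 0 := by
          intro t htb
          apply image_eq_zero_of_notMem_tsupport
          intro hmem
          exact absurd (hSb' (s, t) hmem) (not_le.2 htb)
        have := poincare1d_complex a b' ha hb'0 hb'a (fun v => ψ (s, v)) hg hsupp
        rw [hE_def]
        exact this
      -- Fubini
      have hrestr : (volume : Measure (ℝ × ℝ)).restrict (strip0 a)
          = (volume : Measure ℝ).prod ((volume : Measure ℝ).restrict (Ioo (-a) a)) := by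
        rw [strip0, Measure.volume_eq_prod, ← Measure.prod_restrict,
          Measure.restrict_univ]
      have hG0p : Integrable (fun p => ‖ψ p‖ ^ 2)
          ((volume : Measure ℝ).prod ((volume : Measure ℝ).restrict (Ioo (-a) a))) := by
        rw [← hrestr]; exact hG0i
      have hG2p : Integrable (fun p => ‖pd2 ψ p‖ ^ 2)
          ((volume : Measure ℝ).prod ((volume : Measure ℝ).restrict (Ioo (-a) a))) := by
        rw [← hrestr]; exact hG2i
      have e0 : ∫ p in strip0 a, ‖ψ p‖ ^ 2
          = ∫ s, ∫ t in Ioo (-a) a, ‖ψ (s, t)‖ ^ 2 := by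
        rw [← MeasureTheory.integral_prod _ hG0p, ← hrestr]
      have e2 : ∫ p in strip0 a, ‖pd2 ψ p‖ ^ 2
          = ∫ s, ∫ t in Ioo (-a) a, ‖pd2 ψ (s, t)‖ ^ 2 := by
        rw [← MeasureTheory.integral_prod _ hG2p, ← hrestr]
      rw [e0, e2, ← integral_const_mul]
      apply integral_mono ((hG0p.integral_prod_left).const_mul E) hG2p.integral_prod_left
      exact hslice
  -- put everything together
  have hG0nn : 0 ≤ ∫ p in strip0 a, ‖ψ p‖ ^ 2 :=
    integral_nonneg fun p => sq_nonneg _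
  have hG2nn : 0 ≤ ∫ p in strip0 a, ‖pd2 ψ p‖ ^ 2 :=
    integral_nonneg fun p => sq_nonneg _
  have hcoef : (E - ε) * (1 + 2 * (a * δ)) ≤ (1 - a * δ) * E := by
    nlinarith [hδ2, mul_nonneg (mul_nonneg ha.le hδpos.le) hε.le]
  calc (E - ε) * normHsq n a k Θ ψ
      ≤ (E - ε) * ((1 + 2 * (a * δ)) * ∫ p in strip0 a, ‖ψ p‖ ^ 2) := by
        apply mul_le_mul_of_nonneg_left _ (by linarith)
        exact step2'
    _ = ((E - ε) * (1 + 2 * (a * δ))) * ∫ p in strip0 a, ‖ψ p‖ ^ 2 := by ring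
    _ ≤ ((1 - a * δ) * E) * ∫ p in strip0 a, ‖ψ p‖ ^ 2 :=
        mul_le_mul_of_nonneg_right hcoef hG0nn
    _ = (1 - a * δ) * (E * ∫ p in strip0 a, ‖ψ p‖ ^ 2) := by ring
    _ ≤ (1 - a * δ) * ∫ p in strip0 a, ‖pd2 ψ p‖ ^ 2 :=
        mul_le_mul_of_nonneg_left step3 (by linarith)
    _ ≤ ∫ p in strip0 a, ‖pd2 ψ p‖ ^ 2 * fb p := step2
    _ ≤ formH n a k Θ ψ := step1
end
end

section
/- Let I ⊆ ℝ be an open interval, let Γ : I → ℝ^{n+1} be differentiable with locally Lipschitz derivative and |Γ'(s)| = 1 for all s ∈ I, and set T := Γ'. Let s₀ ∈ I and let N₁⁰,…,N_n⁰ ∈ ℝ^{n+1} be such that (T(s₀),N₁⁰,…,N_n⁰) is an orthonormal basis of ℝ^{n+1}. Then there exists a unique n-tuple of locally Lipschitz maps N₁,…,N_n : I → ℝ^{n+1} such that: (i) N_j(s₀) = N_j⁰ for every j; (ii) (T(s),N₁(s),…,N_n(s)) is an orthonormal basis of ℝ^{n+1} for every s ∈ I; and (iii) for almost every s ∈ I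 and every j, the derivative N_j'(s) is a scalar multiple of T(s). In other words, every C^{1,1} unit-speed curve admits a unique relatively parallel adapted frame with prescribed initial normal vectors. -/
/-!
A relatively parallel normal field `N` along `T = Γ'` satisfies `⟪T, N⟫ = 0`, so differentiating
forces `N' = -⟪T', N⟫ T`. This is a linear ODE whose coefficient is only locally essentially
bounded (`T` is merely Lipschitz), so it is solved in integral form by Picard iteration on
compact subintervals, and the solutions are glued along the open interval. Conversely, if two
fields `F`, `G` are normal to `T` and have tangential derivatives, then `⟪F, G⟫` is locally
Lipschitz with derivative `0` almost everywhere, hence constant. This transports orthonormality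
from `s₀` to every `s`, and applied to `F = G = M_j - N_j` it gives uniqueness.
-/

open MeasureTheory Set Filter Function

open scoped Topology NNReal Nat Interval

lemma locallyLipschitzOn_iff_exists_Ioo {X : Type*} [PseudoEMetricSpace X] {I : Set ℝ}
    (hI : IsOpen I) {f : ℝ → X} :
    LocallyLipschitzOn I f ↔
      ∀ s ∈ I, ∃ ε : ℝ, 0 < ε ∧ ∃ L : ℝ≥0, LipschitzOnWith L f (Ioo (s - ε) (s + ε)) := by
  refine ⟨fun h s hs => ?_, fun h s hs => ?_⟩
  · obtain ⟨L, t, ht, hL⟩ := h hs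
    obtain ⟨ε, hε, hball⟩ := Metric.mem_nhds_iff.1 (hI.nhdsWithin_eq hs ▸ ht)
    exact ⟨ε, hε, L, hL.mono (Real.ball_eq_Ioo s ε ▸ hball)⟩
  · obtain ⟨ε, hε, L, hL⟩ := h s hs
    exact ⟨L, _, mem_nhdsWithin_of_mem_nhds (Ioo_mem_nhds (by linarith) (by linarith)), hL⟩

section LocallyLipschitzOn

variable {α β γ : Type*} [PseudoEMetricSpace α] [PseudoEMetricSpace β] [PseudoEMetricSpace γ]
  {s : Set α}

lemma LocallyLipschitzOn.prodMk {f : α → β} {g : α → γ} (hf : LocallyLipschitzOn s f)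
    (hg : LocallyLipschitzOn s g) : LocallyLipschitzOn s fun x => (f x, g x) := fun x hx => by
  obtain ⟨Kf, t, ht, hKf⟩ := hf hx
  obtain ⟨Kg, u, hu, hKg⟩ := hg hx
  exact ⟨max Kf Kg, t ∩ u, inter_mem ht hu,
    (hKf.mono inter_subset_left).prodMk (hKg.mono inter_subset_right)⟩

lemma LocallyLipschitz.comp_locallyLipschitzOn {g : β → γ} {f : α → β} (hg : LocallyLipschitz g)
    (hf : LocallyLipschitzOn s f) : LocallyLipschitzOn s (g ∘ f) := fun x hx => by
  obtain ⟨Kg, V, hV, hgV⟩ := hg (f x)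
  obtain ⟨Kf, t, ht, hft⟩ := hf hx
  exact ⟨Kg * Kf, t ∩ f ⁻¹' V, inter_mem ht (hf.continuousOn x hx hV),
    hgV.comp (hft.mono inter_subset_left) fun _ hy => hy.2⟩

end LocallyLipschitzOn

lemma LocallyLipschitzOn.inner {α E : Type*} [PseudoEMetricSpace α] [NormedAddCommGroup E]
    [InnerProductSpace ℝ E] {s : Set α} {f g : α → E} (hf : LocallyLipschitzOn s f)
    (hg : LocallyLipschitzOn s g) : LocallyLipschitzOn s fun x => inner ℝ (f x) (g x) :=
  ((contDiff_inner (𝕜 := ℝ) (n := 1)).locallyLipschitz).comp_locallyLipschitzOn (hf.prodMk hg)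

lemma IsOpen.ae_of_ae_Ioo {I : Set ℝ} (hI : IsOpen I) {p : ℝ → Prop}
    (h : ∀ a b, a < b → Icc a b ⊆ I → ∀ᵐ x, x ∈ Ioo a b → p x) : ∀ᵐ x, x ∈ I → p x := by
  have hℚ : ∀ᵐ x, ∀ q : ℚ × ℚ, (q.1 : ℝ) < q.2 → Icc (q.1 : ℝ) q.2 ⊆ I →
      x ∈ Ioo (q.1 : ℝ) q.2 → p x :=
    ae_all_iff.2 fun q => eventually_imp_distrib_left.2 fun hlt =>
      eventually_imp_distrib_left.2 fun hq => h _ _ hlt hq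
  filter_upwards [hℚ] with x hx hxI
  obtain ⟨ε, hε, hball⟩ := Metric.isOpen_iff.1 hI x hxI
  obtain ⟨a, hxa, hax⟩ := exists_rat_btwn (show x - ε < x by linarith)
  obtain ⟨b, hxb, hbx⟩ := exists_rat_btwn (show x < x + ε by linarith)
  refine hx (a, b) (hax.trans hxb) ?_ ⟨hax, hxb⟩
  exact (Icc_subset_Ioo hxa hbx).trans (Real.ball_eq_Ioo x ε ▸ hball)

lemma LocallyLipschitzOn.ae_hasDerivAt_deriv {V : Type*} [NormedAddCommGroup V]
    [NormedSpace ℝ V] [FiniteDimensional ℝ V] {I : Set ℝ} (hI : IsOpen I) {f : ℝ → V}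
    (hf : LocallyLipschitzOn I f) : ∀ᵐ x, x ∈ I → HasDerivAt f (deriv f x) x := by
  refine hI.ae_of_ae_Ioo fun a b _ hab => ?_
  obtain ⟨K, hK⟩ := (hf.mono hab).exists_lipschitzOnWith_of_compact isCompact_Icc
  filter_upwards [hK.ae_differentiableWithinAt_of_mem_real] with x hx hxab
  exact ((hx (Ioo_subset_Icc_self hxab)).differentiableAt
    (Icc_mem_nhds hxab.1 hxab.2)).hasDerivAt

lemma LocallyLipschitzOn.eq_of_ae_hasDerivAt_zero {F : Type*} [NormedAddCommGroup F]
    [NormedSpace ℝ F] {I : Set ℝ} (hI : I.OrdConnected) {f : ℝ → F}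
    (hf : LocallyLipschitzOn I f) (hf' : ∀ᵐ x, x ∈ I → HasDerivAt f 0 x) {x y : ℝ}
    (hx : x ∈ I) (hy : y ∈ I) : f x = f y := by
  have hxy : uIcc x y ⊆ I := hI.uIcc_subset hx hy
  obtain ⟨K, hK⟩ := (hf.mono hxy).exists_lipschitzOnWith_of_compact isCompact_uIcc
  obtain ⟨C, hC⟩ := hK.absolutelyContinuousOnInterval.const_of_ae_hasDerivAt_zero
    (by filter_upwards [hf'] with u hu hu' using hu (hxy hu'))
  rw [hC x left_mem_uIcc, hC y right_mem_uIcc]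

def LocallyEssBoundedOn {F : Type*} [Norm F] (A : ℝ → F) (I : Set ℝ) : Prop :=
  ∀ a b, Icc a b ⊆ I → ∃ K, ∀ᵐ u, u ∈ Icc a b → ‖A u‖ ≤ K

section LinearIntegralEquation

variable {E : Type*} [NormedAddCommGroup E] [NormedSpace ℝ E] {A : ℝ → E →L[ℝ] E} {s₀ : ℝ}

structure IsLinearIntegralSolutionOn (A : ℝ → E →L[ℝ] E) (s₀ : ℝ) (v : E) (J : Set ℝ)
    (N : ℝ → E) : Prop where
  continuousOn : ContinuousOn N J
  eq_add_integral : ∀ s ∈ J, N s = v + ∫ u in s₀..s, A u (N u)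

lemma integrableOn_Icc_clm_apply {a b K : ℝ}
    (hA : AEStronglyMeasurable A (volume.restrict (Icc a b)))
    (hK : ∀ᵐ u, u ∈ Icc a b → ‖A u‖ ≤ K) {f : ℝ → E} (hf : ContinuousOn f (Icc a b)) :
    IntegrableOn (fun u => A u (f u)) (Icc a b) := by
  obtain ⟨C, hC⟩ := isCompact_Icc.exists_bound_of_continuousOn hf
  refine Integrable.mono' (integrable_const (K * C))
    ((ContinuousLinearMap.apply ℝ E).aestronglyMeasurable_comp₂
      (hf.aestronglyMeasurable measurableSet_Icc) hA) ?_
  filter_upwards [ae_restrict_of_ae hK, ae_restrict_mem measurableSet_Icc] with u hKu hu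
  exact (A u).le_of_opNorm_le_of_le (hKu hu) (hC u hu)

lemma norm_integral_clm_apply_le_pow_div_factorial {c d K B : ℝ} (hK0 : 0 ≤ K) (hB : 0 ≤ B)
    (hK : ∀ᵐ u, u ∈ Icc c d → ‖A u‖ ≤ K) (hs₀ : s₀ ∈ Icc c d) {s : ℝ} (hs : s ∈ Icc c d)
    {w : ℝ → E} {m : ℕ} (hw : ∀ u ∈ Icc c d, ‖w u‖ ≤ B * (K * |u - s₀|) ^ m / m !) :
    ‖∫ u in s₀..s, A u (w u)‖ ≤ B * (K * |s - s₀|) ^ (m + 1) / (m + 1)! := by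
  have hsub : Ι s₀ s ⊆ Icc c d := uIoc_subset_uIcc.trans (uIcc_subset_Icc hs₀ hs)
  calc ‖∫ u in s₀..s, A u (w u)‖
      ≤ |∫ u in s₀..s, B * K ^ (m + 1) / m ! * |u - s₀| ^ m| := by
        refine intervalIntegral.norm_integral_le_abs_of_norm_le ?_
          (Continuous.intervalIntegrable (by fun_prop) _ _)
        filter_upwards [ae_restrict_of_ae hK, ae_restrict_mem measurableSet_uIoc] with u hKu hu
        calc ‖A u (w u)‖ ≤ K * (B * (K * |u - s₀|) ^ m / m !) :=
              (A u).le_of_opNorm_le_of_le (hKu (hsub hu)) (hw u (hsub hu))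
          _ = B * K ^ (m + 1) / m ! * |u - s₀| ^ m := by ring
    _ = B * (K * |s - s₀|) ^ (m + 1) / (m + 1)! := by
        rw [intervalIntegral.integral_const_mul, abs_mul, abs_of_nonneg (by positivity),
          intervalIntegral.abs_intervalIntegral_eq, integral_pow_abs_sub_uIoc,
          abs_of_nonneg (by positivity), Nat.factorial_succ]
        push_cast
        field_simp
        ring

lemma intervalIntegrable_clm_apply {c d K : ℝ}
    (hA : AEStronglyMeasurable A (volume.restrict (Icc c d)))
    (hK : ∀ᵐ u, u ∈ Icc c d → ‖A u‖ ≤ K) {f : ℝ → E} (hf : ContinuousOn f (Icc c d)) {a b : ℝ}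
    (hab : uIcc a b ⊆ Icc c d) : IntervalIntegrable (fun u => A u (f u)) volume a b :=
  ((integrableOn_Icc_clm_apply hA hK hf).mono_set hab).intervalIntegrable

variable {c d K : ℝ}

noncomputable def picardIcc (hA : AEStronglyMeasurable A (volume.restrict (Icc c d)))
    (hK : ∀ᵐ u, u ∈ Icc c d → ‖A u‖ ≤ K) (hs₀ : s₀ ∈ Icc c d) (v : E) (f : C(Icc c d, E)) :
    C(Icc c d, E) where
  toFun t := v + ∫ u in s₀..t, A u (f.IccExtend (hs₀.1.trans hs₀.2) u)
  continuous_toFun := by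
    have hcd := hs₀.1.trans hs₀.2
    have hprim := intervalIntegral.continuousOn_primitive_interval' (a := s₀)
      (intervalIntegrable_clm_apply hA hK (f.IccExtend hcd).continuous.continuousOn
        (uIcc_of_le hcd).subset) (by rwa [uIcc_of_le hcd])
    rw [uIcc_of_le hcd] at hprim
    exact continuous_const.add (hprim.comp_continuous continuous_subtype_val Subtype.prop)

section Picard

variable (hA : AEStronglyMeasurable A (volume.restrict (Icc c d)))
  (hK : ∀ᵐ u, u ∈ Icc c d → ‖A u‖ ≤ K) (hs₀ : s₀ ∈ Icc c d) (v : E)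

lemma picardIcc_apply (f : C(Icc c d, E)) (t : Icc c d) :
    picardIcc hA hK hs₀ v f t = v + ∫ u in s₀..t, A u (f.IccExtend (hs₀.1.trans hs₀.2) u) :=
  rfl

lemma norm_picardIcc_iterate_sub_le (hK0 : 0 ≤ K) (m : ℕ) (f g : C(Icc c d, E)) (t : Icc c d) :
    ‖(picardIcc hA hK hs₀ v)^[m] f t - (picardIcc hA hK hs₀ v)^[m] g t‖ ≤
      dist f g * (K * |(t : ℝ) - s₀|) ^ m / m ! := by
  induction m generalizing t with
  | zero => simpa [← dist_eq_norm] using ContinuousMap.dist_apply_le_dist t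
  | succ m ih =>
    have hcd := hs₀.1.trans hs₀.2
    have hint (F : C(Icc c d, E)) := intervalIntegrable_clm_apply hA hK
      (F.IccExtend hcd).continuous.continuousOn (uIcc_subset_Icc hs₀ t.2)
    rw [iterate_succ_apply', iterate_succ_apply', picardIcc_apply, picardIcc_apply,
      add_sub_add_left_eq_sub, ← intervalIntegral.integral_sub (hint _) (hint _)]
    simp_rw [← map_sub]
    refine norm_integral_clm_apply_le_pow_div_factorial hK0 dist_nonneg hK hs₀ t.2 fun u hu => ?_
    simpa [IccExtend_of_mem hcd _ hu] using ih ⟨u, hu⟩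

lemma dist_picardIcc_iterate_le (hK0 : 0 ≤ K) (m : ℕ) (f g : C(Icc c d, E)) :
    dist ((picardIcc hA hK hs₀ v)^[m] f) ((picardIcc hA hK hs₀ v)^[m] g) ≤
      (K * (d - c)) ^ m / m ! * dist f g := by
  have hcd : 0 ≤ d - c := sub_nonneg.2 (hs₀.1.trans hs₀.2)
  refine (ContinuousMap.dist_le (by positivity)).2 fun t => ?_
  rw [dist_eq_norm, mul_comm]
  refine (norm_picardIcc_iterate_sub_le hA hK hs₀ v hK0 m f g t).trans ?_
  have : |(t : ℝ) - s₀| ≤ d - c :=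
    abs_sub_le_iff.2 ⟨by linarith [t.2.2, hs₀.1], by linarith [t.2.1, hs₀.2]⟩
  rw [mul_div_assoc]
  gcongr

lemma exists_contractingWith_picardIcc_iterate (hK0 : 0 ≤ K) :
    ∃ (m : ℕ) (C : ℝ≥0), ContractingWith C (picardIcc hA hK hs₀ v)^[m] := by
  obtain ⟨m, hm⟩ := (FloorSemiring.tendsto_pow_div_factorial_atTop (K * (d - c))).eventually
    (gt_mem_nhds zero_lt_one) |>.exists
  have hcd : 0 ≤ d - c := sub_nonneg.2 (hs₀.1.trans hs₀.2)
  exact ⟨m, ⟨_, by positivity⟩, hm,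
    LipschitzWith.of_dist_le_mul (dist_picardIcc_iterate_le hA hK hs₀ v hK0 m)⟩

end Picard

variable {v : E}

lemma IsLinearIntegralSolutionOn.isFixedPt_picardIcc
    (hA : AEStronglyMeasurable A (volume.restrict (Icc c d)))
    (hK : ∀ᵐ u, u ∈ Icc c d → ‖A u‖ ≤ K) (hs₀ : s₀ ∈ Icc c d) {N : ℝ → E}
    (hN : IsLinearIntegralSolutionOn A s₀ v (Icc c d) N) :
    IsFixedPt (picardIcc hA hK hs₀ v) ⟨(Icc c d).domRestrict N, hN.continuousOn.domRestrict⟩ := by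
  ext t
  refine ((hN.eq_add_integral t t.2).trans
    (congrArg _ (intervalIntegral.integral_congr fun u hu => ?_))).symm
  simp [IccExtend_of_mem (hs₀.1.trans hs₀.2) _ (uIcc_subset_Icc hs₀ t.2 hu)]

theorem IsLinearIntegralSolutionOn.eqOn_Icc
    (hA : AEStronglyMeasurable A (volume.restrict (Icc c d)))
    (hK : ∀ᵐ u, u ∈ Icc c d → ‖A u‖ ≤ K) (hs₀ : s₀ ∈ Icc c d) {M N : ℝ → E}
    (hM : IsLinearIntegralSolutionOn A s₀ v (Icc c d) M)
    (hN : IsLinearIntegralSolutionOn A s₀ v (Icc c d) N) : EqOn M N (Icc c d) := by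
  wlog hK0 : 0 ≤ K generalizing K
  · exact this (K := max K 0) (by filter_upwards [hK] with u hu h using le_max_of_le_left (hu h))
      (le_max_right _ _)
  obtain ⟨m, C, hC⟩ := exists_contractingWith_picardIcc_iterate hA hK hs₀ v hK0
  have hMN := hC.fixedPoint_unique' ((hM.isFixedPt_picardIcc hA hK hs₀).iterate m)
    ((hN.isFixedPt_picardIcc hA hK hs₀).iterate m)
  exact fun s hs => DFunLike.congr_fun hMN ⟨s, hs⟩

theorem exists_isLinearIntegralSolutionOn_Icc [CompleteSpace E]
    (hA : AEStronglyMeasurable A (volume.restrict (Icc c d)))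
    (hK : ∀ᵐ u, u ∈ Icc c d → ‖A u‖ ≤ K) (hs₀ : s₀ ∈ Icc c d) (v : E) :
    ∃ N, IsLinearIntegralSolutionOn A s₀ v (Icc c d) N := by
  wlog hK0 : 0 ≤ K generalizing K
  · exact this (K := max K 0) (by filter_upwards [hK] with u hu h using le_max_of_le_left (hu h))
      (le_max_right _ _)
  obtain ⟨m, C, hC⟩ := exists_contractingWith_picardIcc_iterate hA hK hs₀ v hK0
  have hcd := hs₀.1.trans hs₀.2
  set x := ContractingWith.fixedPoint _ hC
  have hx : IsFixedPt (picardIcc hA hK hs₀ v) x := hC.isFixedPt_fixedPoint_iterate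
  refine ⟨x.IccExtend hcd, (x.IccExtend hcd).continuous.continuousOn, fun s hs => ?_⟩
  rw [ContinuousMap.coe_IccExtend, IccExtend_of_mem hcd _ hs]
  exact (DFunLike.congr_fun hx ⟨s, hs⟩).symm

lemma IsLinearIntegralSolutionOn.mono {J J' : Set ℝ} {N : ℝ → E}
    (hN : IsLinearIntegralSolutionOn A s₀ v J' N) (hJ : J ⊆ J') :
    IsLinearIntegralSolutionOn A s₀ v J N :=
  ⟨hN.continuousOn.mono hJ, fun s hs => hN.eq_add_integral s (hJ hs)⟩

section OpenInterval

variable {I : Set ℝ}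

lemma IsOpen.exists_Icc_subset_mem_nhds_mem (hIo : IsOpen I) (hIc : I.OrdConnected)
    (hs₀ : s₀ ∈ I) {s : ℝ} (hs : s ∈ I) :
    ∃ a b, s₀ ∈ Icc a b ∧ Icc a b ⊆ I ∧ Icc a b ∈ 𝓝 s := by
  obtain ⟨a, b, hab, hnhds, habI⟩ := exists_Icc_mem_subset_of_mem_nhds (hIo.mem_nhds hs)
  refine ⟨min a s₀, max b s₀, ⟨min_le_right _ _, le_max_right _ _⟩,
    hIc.out (min_rec' (· ∈ I) (habI ⟨le_rfl, hab.1.trans hab.2⟩) hs₀)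
      (max_rec' (· ∈ I) (habI ⟨hab.1.trans hab.2, le_rfl⟩) hs₀),
    mem_of_superset hnhds (Icc_subset_Icc (min_le_left _ _) (le_max_left _ _))⟩

theorem exists_isLinearIntegralSolutionOn [CompleteSpace E] (hIo : IsOpen I)
    (hIc : I.OrdConnected) (hA : AEStronglyMeasurable A (volume.restrict I))
    (hAI : LocallyEssBoundedOn A I) (hs₀ : s₀ ∈ I) (v : E) :
    ∃ N, IsLinearIntegralSolutionOn A s₀ v I N := by
  -- By uniqueness on compact intervals the local solutions `sol a b` are compatible, so
  -- `s ↦ sol (min s s₀) (max s s₀) s` is a global solution.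
  choose! sol hsol using fun a b (hab : s₀ ∈ Icc a b ∧ Icc a b ⊆ I) =>
    let ⟨_, hK⟩ := hAI a b hab.2
    exists_isLinearIntegralSolutionOn_Icc (hA.mono_set hab.2) hK hab.1 v
  have hagree : ∀ a b, s₀ ∈ Icc a b → Icc a b ⊆ I → ∀ s ∈ Icc a b,
      sol (min s s₀) (max s s₀) s = sol a b s := by
    intro a b hs₀ab hab s hs
    have hsub : Icc (min s s₀) (max s s₀) ⊆ Icc a b :=
      Icc_subset_Icc (le_min hs.1 hs₀ab.1) (max_le hs.2 hs₀ab.2)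
    have hmem : s₀ ∈ Icc (min s s₀) (max s s₀) := ⟨min_le_right _ _, le_max_right _ _⟩
    obtain ⟨K, hK⟩ := hAI _ _ (hsub.trans hab)
    exact (hsol _ _ ⟨hmem, hsub.trans hab⟩).eqOn_Icc (hA.mono_set (hsub.trans hab)) hK hmem
      ((hsol a b ⟨hs₀ab, hab⟩).mono hsub) ⟨min_le_left _ _, le_max_left _ _⟩
  refine ⟨fun s => sol (min s s₀) (max s s₀) s, fun s hs => ?_, fun s hs => ?_⟩ <;>
    obtain ⟨a, b, hs₀ab, hab, hnhds⟩ := hIo.exists_Icc_subset_mem_nhds_mem hIc hs₀ hs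
  · exact (((hsol a b ⟨hs₀ab, hab⟩).continuousOn.continuousAt hnhds).congr
      (eventuallyEq_of_mem hnhds (hagree a b hs₀ab hab)).symm).continuousWithinAt
  · rw [hagree a b hs₀ab hab s (mem_of_mem_nhds hnhds),
      (hsol a b ⟨hs₀ab, hab⟩).eq_add_integral s (mem_of_mem_nhds hnhds)]
    refine congrArg _ (intervalIntegral.integral_congr fun u hu => ?_)
    rw [hagree a b hs₀ab hab u (uIcc_subset_Icc hs₀ab (mem_of_mem_nhds hnhds) hu)]

lemma IsLinearIntegralSolutionOn.sub_eq_integral (hIc : I.OrdConnected)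
    (hA : AEStronglyMeasurable A (volume.restrict I))
    (hAI : LocallyEssBoundedOn A I) (hs₀ : s₀ ∈ I) {N : ℝ → E}
    (hN : IsLinearIntegralSolutionOn A s₀ v I N) {x y : ℝ}
    (hx : x ∈ I) (hy : y ∈ I) : N y - N x = ∫ u in x..y, A u (N u) := by
  have hint : ∀ z ∈ I, IntervalIntegrable (fun u => A u (N u)) volume s₀ z := fun z hz =>
    let ⟨_, hK⟩ := hAI _ _ (hIc.uIcc_subset hs₀ hz)
    intervalIntegrable_clm_apply (hA.mono_set (hIc.uIcc_subset hs₀ hz)) hK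
      (hN.continuousOn.mono (hIc.uIcc_subset hs₀ hz)) subset_rfl
  rw [hN.eq_add_integral y hy, hN.eq_add_integral x hx, add_sub_add_left_eq_sub,
    intervalIntegral.integral_interval_sub_left (hint y hy) (hint x hx)]

lemma IsLinearIntegralSolutionOn.locallyLipschitzOn (hIo : IsOpen I) (hIc : I.OrdConnected)
    (hA : AEStronglyMeasurable A (volume.restrict I))
    (hAI : LocallyEssBoundedOn A I) (hs₀ : s₀ ∈ I) {N : ℝ → E}
    (hN : IsLinearIntegralSolutionOn A s₀ v I N) :
    LocallyLipschitzOn I N := fun s hs => by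
  obtain ⟨a, b, -, hnhds, hab⟩ := exists_Icc_mem_subset_of_mem_nhds (hIo.mem_nhds hs)
  obtain ⟨K, hK⟩ := hAI a b hab
  obtain ⟨C, hC⟩ := isCompact_Icc.exists_bound_of_continuousOn (hN.continuousOn.mono hab)
  refine ⟨(K * C).toNNReal, Icc a b, mem_nhdsWithin_of_mem_nhds hnhds,
    LipschitzOnWith.of_dist_le_mul fun x hx y hy => ?_⟩
  rw [dist_eq_norm, hN.sub_eq_integral hIc hA hAI hs₀ (hab hy) (hab hx), Real.dist_eq]
  refine (intervalIntegral.norm_integral_le_of_norm_le_const_ae ?_).trans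
    (mul_le_mul_of_nonneg_right (Real.le_coe_toNNReal _) (abs_nonneg _))
  filter_upwards [hK] with u hu hu'
  have hu'' := uIoc_subset_uIcc.trans (uIcc_subset_Icc hy hx) hu'
  exact (A u).le_of_opNorm_le_of_le (hu hu'') (hC u hu'')

lemma IsLinearIntegralSolutionOn.ae_hasDerivAt [CompleteSpace E] (hIo : IsOpen I)
    (hIc : I.OrdConnected) (hA : AEStronglyMeasurable A (volume.restrict I))
    (hAI : LocallyEssBoundedOn A I) (hs₀ : s₀ ∈ I) {N : ℝ → E}
    (hN : IsLinearIntegralSolutionOn A s₀ v I N) :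
    ∀ᵐ s, s ∈ I → HasDerivAt N (A s (N s)) s := by
  refine hIo.ae_of_ae_Ioo fun a b hlt hab => ?_
  obtain ⟨K, hK⟩ := hAI a b hab
  have hint := intervalIntegrable_clm_apply (hA.mono_set hab) hK (hN.continuousOn.mono hab)
    (uIcc_of_le hlt.le).subset
  filter_upwards [hint.ae_hasDerivAt_integral] with x hx hxab
  refine ((hx (Icc_subset_uIcc (Ioo_subset_Icc_self hxab)) a left_mem_uIcc).const_add
    (N a)).congr_of_eventuallyEq ?_
  filter_upwards [Icc_mem_nhds hxab.1 hxab.2] with y hy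
  exact eq_add_of_sub_eq'
    (hN.sub_eq_integral hIc hA hAI hs₀ (hab (left_mem_Icc.2 hlt.le)) (hab hy))

end OpenInterval

end LinearIntegralEquation

section RelativelyParallel

open InnerProductSpace

variable {E : Type*} [NormedAddCommGroup E] [InnerProductSpace ℝ E] {I : Set ℝ} {T : ℝ → E}

structure IsRelativelyParallelOn (T : ℝ → E) (I : Set ℝ) (F : ℝ → E) : Prop where
  locallyLipschitzOn : LocallyLipschitzOn I F
  inner_eq_zero : ∀ s ∈ I, inner ℝ (T s) (F s) = 0
  ae_hasDerivAt : ∀ᵐ s, s ∈ I → ∃ c : ℝ, HasDerivAt F (c • T s) s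

lemma IsRelativelyParallelOn.sub {F G : ℝ → E} (hF : IsRelativelyParallelOn T I F)
    (hG : IsRelativelyParallelOn T I G) : IsRelativelyParallelOn T I (F - G) := by
  refine ⟨hF.locallyLipschitzOn.sub hG.locallyLipschitzOn,
    fun s hs => by simp [inner_sub_right, hF.inner_eq_zero s hs, hG.inner_eq_zero s hs], ?_⟩
  filter_upwards [hF.ae_hasDerivAt, hG.ae_hasDerivAt] with s hFs hGs hs
  obtain ⟨c, hc⟩ := hFs hs
  obtain ⟨c', hc'⟩ := hGs hs
  exact ⟨c - c', by simpa [sub_smul] using hc.sub hc'⟩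

lemma IsRelativelyParallelOn.inner_eq (hI : I.OrdConnected) {F G : ℝ → E}
    (hF : IsRelativelyParallelOn T I F) (hG : IsRelativelyParallelOn T I G) {x y : ℝ}
    (hx : x ∈ I) (hy : y ∈ I) : inner ℝ (F x) (G x) = inner ℝ (F y) (G y) := by
  refine (hF.locallyLipschitzOn.inner hG.locallyLipschitzOn).eq_of_ae_hasDerivAt_zero hI ?_ hx hy
  filter_upwards [hF.ae_hasDerivAt, hG.ae_hasDerivAt] with s hFs hGs hs
  obtain ⟨c, hc⟩ := hFs hs
  obtain ⟨c', hc'⟩ := hGs hs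
  refine (hc.inner ℝ hc').congr_deriv ?_
  rw [real_inner_smul_right, real_inner_smul_left, real_inner_comm, hF.inner_eq_zero s hs,
    hG.inner_eq_zero s hs]
  ring

lemma IsRelativelyParallelOn.eqOn (hI : I.OrdConnected) {F G : ℝ → E}
    (hF : IsRelativelyParallelOn T I F) (hG : IsRelativelyParallelOn T I G) {s₀ : ℝ}
    (hs₀ : s₀ ∈ I) (h : F s₀ = G s₀) : EqOn F G I := fun s hs => by
  have := (hF.sub hG).inner_eq hI (hF.sub hG) hs hs₀
  rwa [Pi.sub_apply, Pi.sub_apply, h, sub_self, inner_zero_left, inner_self_eq_zero,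
    sub_eq_zero] at this

lemma locallyEssBoundedOn_neg_rankOne_deriv (hT : LocallyLipschitzOn I T)
    (hunit : ∀ s ∈ I, ‖T s‖ = 1) :
    LocallyEssBoundedOn (fun u => -rankOne ℝ (T u) (deriv T u)) I := fun a b hab => by
  obtain ⟨L, hL⟩ := (hT.mono hab).exists_lipschitzOnWith_of_compact isCompact_Icc
  refine ⟨L, ?_⟩
  filter_upwards [(Ioo_ae_eq_Icc (a := a) (b := b) (μ := volume)).mem_iff] with u hu hu'
  rw [← hu] at hu'
  rw [norm_neg, norm_rankOne, hunit u (hab (Ioo_subset_Icc_self hu')), one_mul]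
  exact norm_deriv_le_of_lipschitzOn (Icc_mem_nhds hu'.1 hu'.2) hL

theorem exists_isRelativelyParallelOn [FiniteDimensional ℝ E] (hIo : IsOpen I)
    (hIc : I.OrdConnected) (hT : LocallyLipschitzOn I T) (hunit : ∀ s ∈ I, ‖T s‖ = 1) {s₀ : ℝ}
    (hs₀ : s₀ ∈ I) {v : E} (hv : inner ℝ (T s₀) v = 0) :
    ∃ N, N s₀ = v ∧ IsRelativelyParallelOn T I N := by
  -- The coefficient sends `N` to `-⟪T', N⟫ T`, the only tangential derivative compatible
  -- with `⟪T, N⟫ = 0`.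
  have hA : AEStronglyMeasurable (fun u => -rankOne ℝ (T u) (deriv T u)) (volume.restrict I) :=
    ((rankOne ℝ (E := E) (F := E)).continuous₂.comp_aestronglyMeasurable₂
      (hT.continuousOn.aestronglyMeasurable hIo.measurableSet)
      (aestronglyMeasurable_deriv T _)).neg
  have hAI := locallyEssBoundedOn_neg_rankOne_deriv hT hunit
  obtain ⟨N, hN⟩ := exists_isLinearIntegralSolutionOn hIo hIc hA hAI hs₀ v
  have hN' := hN.ae_hasDerivAt hIo hIc hA hAI hs₀
  have hNlip := hN.locallyLipschitzOn hIo hIc hA hAI hs₀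
  have hNs₀ : N s₀ = v := by simpa using hN.eq_add_integral s₀ hs₀
  have hTN : ∀ s ∈ I, inner ℝ (T s) (N s) = 0 := fun s hs => by
    rw [(hT.inner hNlip).eq_of_ae_hasDerivAt_zero hIc ?_ hs hs₀, hNs₀, hv]
    filter_upwards [hT.ae_hasDerivAt_deriv hIo, hN'] with u hTu hNu hu
    refine ((hTu hu).inner ℝ (hNu hu)).congr_deriv ?_
    simp only [neg_apply, rankOne_apply, inner_neg_right, inner_smul_right,
      real_inner_self_eq_norm_sq, hunit u hu]
    ring
  refine ⟨N, hNs₀, hNlip, hTN, ?_⟩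
  filter_upwards [hN'] with s hs hsI
  exact ⟨-inner ℝ (deriv T s) (N s), by simpa [neg_smul] using hs hsI⟩

end RelativelyParallel

lemma orthonormal_fin_cons_iff {E : Type*} [NormedAddCommGroup E] [InnerProductSpace ℝ E] {n : ℕ}
    {x : E} {f : Fin n → E} :
    Orthonormal ℝ (Fin.cons x f : Fin (n + 1) → E) ↔
      ‖x‖ = 1 ∧ (∀ j, inner ℝ x (f j) = 0) ∧ Orthonormal ℝ f := by
  simp only [orthonormal_iff_ite, Fin.forall_fin_succ, Fin.cons_zero, Fin.cons_succ,
    real_inner_self_eq_norm_sq, pow_eq_one_iff_of_nonneg (norm_nonneg x) two_ne_zero,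
    real_inner_comm x, Fin.succ_ne_zero, (Fin.succ_ne_zero _).symm, Fin.succ_inj, forall_and,
    if_true, if_false]
  tauto

theorem relatively_parallel_adapted_frame_exists_unique_general
    (n : ℕ)
    (I : Set ℝ) (hIopen : IsOpen I) (hIconn : I.OrdConnected)
    (Γ : ℝ → EuclideanSpace ℝ (Fin (n + 1)))
    (hΓlip : ∀ s ∈ I, ∃ ε : ℝ, 0 < ε ∧ Ioo (s - ε) (s + ε) ⊆ I ∧
      ∃ L : NNReal, LipschitzOnWith L (deriv Γ) (Ioo (s - ε) (s + ε)))
    (hunit : ∀ s ∈ I, ‖deriv Γ s‖ = 1)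
    (s₀ : ℝ) (hs₀ : s₀ ∈ I)
    (N0 : Fin n → EuclideanSpace ℝ (Fin (n + 1)))
    (hON0 : Orthonormal ℝ
      (Fin.cons (deriv Γ s₀) N0 : Fin (n + 1) → EuclideanSpace ℝ (Fin (n + 1)))) :
    ∃ N : Fin n → ℝ → EuclideanSpace ℝ (Fin (n + 1)),
      ((∀ j, N j s₀ = N0 j) ∧
        (∀ j, ∀ s ∈ I, ∃ ε : ℝ, 0 < ε ∧
          ∃ L : NNReal, LipschitzOnWith L (N j) (Ioo (s - ε) (s + ε))) ∧
        (∀ s ∈ I, Orthonormal ℝ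
          (Fin.cons (deriv Γ s) (fun j => N j s) :
            Fin (n + 1) → EuclideanSpace ℝ (Fin (n + 1)))) ∧
        (∀ᵐ s ∂((volume : Measure ℝ).restrict I),
          ∀ j, ∃ c : ℝ, HasDerivAt (N j) (c • deriv Γ s) s)) ∧
      ∀ M : Fin n → ℝ → EuclideanSpace ℝ (Fin (n + 1)),
        ((∀ j, M j s₀ = N0 j) ∧
          (∀ j, ∀ s ∈ I, ∃ ε : ℝ, 0 < ε ∧
            ∃ L : NNReal, LipschitzOnWith L (M j) (Ioo (s - ε) (s + ε))) ∧
          (∀ s ∈ I, Orthonormal ℝ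
            (Fin.cons (deriv Γ s) (fun j => M j s) :
              Fin (n + 1) → EuclideanSpace ℝ (Fin (n + 1)))) ∧
          (∀ᵐ s ∂((volume : Measure ℝ).restrict I),
            ∀ j, ∃ c : ℝ, HasDerivAt (M j) (c • deriv Γ s) s)) →
        ∀ j, ∀ s ∈ I, M j s = N j s := by
  have hT : LocallyLipschitzOn I (deriv Γ) := (locallyLipschitzOn_iff_exists_Ioo hIopen).2
    fun s hs => let ⟨ε, hε, _, L, hL⟩ := hΓlip s hs; ⟨ε, hε, L, hL⟩
  obtain ⟨-, hN0T, hN0⟩ := orthonormal_fin_cons_iff.1 hON0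
  choose N hNs₀ hN using fun j =>
    exists_isRelativelyParallelOn hIopen hIconn hT hunit hs₀ (hN0T j)
  refine ⟨N, ⟨hNs₀,
    fun j => (locallyLipschitzOn_iff_exists_Ioo hIopen).1 (hN j).locallyLipschitzOn,
    fun s hs => orthonormal_fin_cons_iff.2 ⟨hunit s hs, fun j => (hN j).inner_eq_zero s hs,
      orthonormal_iff_ite.2 fun i k => ?_⟩, ?_⟩, ?_⟩
  · rw [(hN i).inner_eq hIconn (hN k) hs hs₀, hNs₀, hNs₀]
    exact orthonormal_iff_ite.1 hN0 i k
  · refine (ae_restrict_iff' hIopen.measurableSet).2 ?_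
    filter_upwards [ae_all_iff.2 fun j => (hN j).ae_hasDerivAt] with s h hs j using h j hs
  · rintro M ⟨hM0, hMlip, hMON, hMder⟩ j s hs
    rw [ae_restrict_iff' hIopen.measurableSet] at hMder
    have hM : IsRelativelyParallelOn (deriv Γ) I (M j) :=
      ⟨(locallyLipschitzOn_iff_exists_Ioo hIopen).2 (hMlip j),
        fun s hs => (orthonormal_fin_cons_iff.1 (hMON s hs)).2.1 j,
        by filter_upwards [hMder] with s h hs using h hs j⟩
    exact hM.eqOn hIconn (hN j) hs₀ ((hM0 j).trans (hNs₀ j).symm) hs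

/-- Every unit-speed curve of class `C^{1,1}` on an open interval admits a
unique relatively parallel adapted frame with prescribed initial normal vectors. -/
theorem relatively_parallel_adapted_frame_exists_unique
    (n : ℕ) (hn : 1 ≤ n)
    (I : Set ℝ) (hIopen : IsOpen I) (hIconn : I.OrdConnected)
    (Γ : ℝ → EuclideanSpace ℝ (Fin (n + 1)))
    (hΓd : ∀ s ∈ I, DifferentiableAt ℝ Γ s)
    (hΓlip : ∀ s ∈ I, ∃ ε : ℝ, 0 < ε ∧ Ioo (s - ε) (s + ε) ⊆ I ∧
      ∃ L : NNReal, LipschitzOnWith L (deriv Γ) (Ioo (s - ε) (s + ε)))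
    (hunit : ∀ s ∈ I, ‖deriv Γ s‖ = 1)
    (s₀ : ℝ) (hs₀ : s₀ ∈ I)
    (N0 : Fin n → EuclideanSpace ℝ (Fin (n + 1)))
    (hON0 : Orthonormal ℝ
      (Fin.cons (deriv Γ s₀) N0 : Fin (n + 1) → EuclideanSpace ℝ (Fin (n + 1)))) :
    ∃ N : Fin n → ℝ → EuclideanSpace ℝ (Fin (n + 1)),
      ((∀ j, N j s₀ = N0 j) ∧
        (∀ j, ∀ s ∈ I, ∃ ε : ℝ, 0 < ε ∧
          ∃ L : NNReal, LipschitzOnWith L (N j) (Ioo (s - ε) (s + ε))) ∧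
        (∀ s ∈ I, Orthonormal ℝ
          (Fin.cons (deriv Γ s) (fun j => N j s) :
            Fin (n + 1) → EuclideanSpace ℝ (Fin (n + 1)))) ∧
        (∀ᵐ s ∂((volume : Measure ℝ).restrict I),
          ∀ j, ∃ c : ℝ, HasDerivAt (N j) (c • deriv Γ s) s)) ∧
      ∀ M : Fin n → ℝ → EuclideanSpace ℝ (Fin (n + 1)),
        ((∀ j, M j s₀ = N0 j) ∧
          (∀ j, ∀ s ∈ I, ∃ ε : ℝ, 0 < ε ∧
            ∃ L : NNReal, LipschitzOnWith L (M j) (Ioo (s - ε) (s + ε))) ∧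
          (∀ s ∈ I, Orthonormal ℝ
            (Fin.cons (deriv Γ s) (fun j => M j s) :
              Fin (n + 1) → EuclideanSpace ℝ (Fin (n + 1)))) ∧
          (∀ᵐ s ∂((volume : Measure ℝ).restrict I),
            ∀ j, ∃ c : ℝ, HasDerivAt (M j) (c • deriv Γ s) s)) →
        ∀ j, ∀ s ∈ I, M j s = N j s :=
  relatively_parallel_adapted_frame_exists_unique_general n I hIopen hIconn Γ hΓlip hunit s₀ hs₀ N0
    hON0
end

section
/- For the strip map 𝓛(s,t) := Γ(s) + t·N_Θ(s), the induced metric is diagonal with Jacobian f: for almost every s ∈ ℝ and every t ∈ (−a,a), the partial derivatives satisfy ∂₁𝓛(s,t) = (1 − t·(k(s)·Θ(s)))·T(s) + t·(Θ₁'(s)N₁(s)+…+Θ_n'(s)N_n(s)) and ∂₂𝓛(s,t) = N_Θ(s); consequently ∂₁𝓛(s,t)·∂₂𝓛(s,t) = 0, |∂₂𝓛(s,t)| = 1, and |∂₁𝓛(s,t)|² = f(s,t)² = (1 − t·(k(s)·Θ(s)))² + t²|Θ'(s)|². -/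
/-! In the orthonormal frame `(T, N₁, …, N_n)` one has `N_Θ = ∑ Θⱼ Nⱼ` and, by the frame
equations `Nⱼ' = -kⱼ T`, `∂ₛ𝓛 = (1 - t k·Θ) T + t ∑ Θⱼ' Nⱼ`. Inner products of such
combinations are dot products of their coefficient vectors, so everything reduces to
`|Θ|² = 1` and its derivative `Θ·Θ' = 0`, which holds wherever the Lipschitz `Θ` is
differentiable, i.e. almost everywhere (Rademacher). -/

open MeasureTheory Real Set Filter

noncomputable section

/-- The generic normal field `N_Θ = Θ₁N₁ + … + Θ_nN_n`. -/
def NTheta (n : ℕ) (N : Fin n → ℝ → EuclideanSpace ℝ (Fin (n + 1)))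
    (Θ : ℝ → Fin n → ℝ) (s : ℝ) : EuclideanSpace ℝ (Fin (n + 1)) :=
  ∑ j, Θ s j • N j s

/-- The strip map `𝓛(s,t) = Γ(s) + t N_Θ(s)`. -/
def stripMap (n : ℕ) (Γ : ℝ → EuclideanSpace ℝ (Fin (n + 1)))
    (N : Fin n → ℝ → EuclideanSpace ℝ (Fin (n + 1)))
    (Θ : ℝ → Fin n → ℝ) (s t : ℝ) : EuclideanSpace ℝ (Fin (n + 1)) :=
  Γ s + t • NTheta n N Θ s

section Frame

variable {E : Type*} [NormedAddCommGroup E] [InnerProductSpace ℝ E] {n : ℕ}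

theorem Orthonormal.inner_cons_combination {x : E} {v : Fin n → E}
    (h : Orthonormal ℝ (Fin.cons x v : Fin (n + 1) → E)) (a b : ℝ) (c d : Fin n → ℝ) :
    inner ℝ (a • x + ∑ j, c j • v j) (b • x + ∑ j, d j • v j) = a * b + ∑ j, c j * d j := by
  have hcomb : ∀ (a : ℝ) (c : Fin n → ℝ), a • x + ∑ j, c j • v j =
      ∑ i, (Fin.cons a c : Fin (n + 1) → ℝ) i • (Fin.cons x v : Fin (n + 1) → E) i := by
    intro a c
    simp only [Fin.sum_univ_succ, Fin.cons_zero, Fin.cons_succ]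
  rw [hcomb, hcomb, h.inner_sum, Fin.sum_univ_succ]
  simp only [Fin.cons_zero, Fin.cons_succ, conj_trivial]

end Frame

theorem sum_mul_deriv_eq_zero_of_sum_sq_eq_const {ι : Type*} [Fintype ι] {Θ : ℝ → ι → ℝ}
    {c s : ℝ} (hconst : ∀ u, ∑ j, Θ u j ^ 2 = c)
    (hΘ : ∀ j, DifferentiableAt ℝ (fun u => Θ u j) s) :
    ∑ j, deriv (fun u => Θ u j) s * Θ s j = 0 := by
  have hsum : HasDerivAt (fun u => ∑ j, Θ u j ^ 2)
      (∑ j, 2 * Θ s j * deriv (fun u => Θ u j) s) s := by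
    refine HasDerivAt.fun_sum fun j _ => ?_
    simpa using (hΘ j).hasDerivAt.fun_pow 2
  have hzero : ∑ j, 2 * Θ s j * deriv (fun u => Θ u j) s = 0 := by
    refine hsum.unique ?_
    simpa only [hconst] using hasDerivAt_const s c
  have htwice : 2 * ∑ j, deriv (fun u => Θ u j) s * Θ s j = 0 := by
    rw [Finset.mul_sum, ← hzero]
    exact Finset.sum_congr rfl fun j _ => by ring
  linarith

section StripMap

variable {n : ℕ} {Γ : ℝ → EuclideanSpace ℝ (Fin (n + 1))}
  {N : Fin n → ℝ → EuclideanSpace ℝ (Fin (n + 1))} {k Θ : ℝ → Fin n → ℝ} {s : ℝ}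

theorem hasDerivAt_stripMap_fst (hΓ : DifferentiableAt ℝ Γ s)
    (hN : ∀ j, HasDerivAt (N j) ((-k s j) • deriv Γ s) s)
    (hΘ : ∀ j, DifferentiableAt ℝ (fun u => Θ u j) s) (t : ℝ) :
    HasDerivAt (fun u => stripMap n Γ N Θ u t)
      ((1 - t * kdot n k Θ s) • deriv Γ s
        + t • ∑ j, deriv (fun u => Θ u j) s • N j s) s := by
  have hNΘ : HasDerivAt (NTheta n N Θ)
      (∑ j, (Θ s j • (-k s j) • deriv Γ s + deriv (fun u => Θ u j) s • N j s)) s :=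
    HasDerivAt.fun_sum fun j _ => (hΘ j).hasDerivAt.smul (hN j)
  have hT : ∑ j, Θ s j • (-k s j) • deriv Γ s = (-kdot n k Θ s) • deriv Γ s := by
    simp only [smul_smul, ← Finset.sum_smul, kdot, ← Finset.sum_neg_distrib, mul_neg, mul_comm]
  refine (hΓ.hasDerivAt.add (hNΘ.const_smul t)).congr_deriv ?_
  rw [Finset.sum_add_distrib, smul_add, ← add_assoc, hT, smul_smul, sub_smul, one_smul, mul_neg,
    neg_smul, sub_eq_add_neg]

theorem hasDerivAt_stripMap_snd (t : ℝ) :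
    HasDerivAt (fun v => stripMap n Γ N Θ s v) (NTheta n N Θ s) t := by
  simpa [stripMap] using ((hasDerivAt_id t).smul_const (NTheta n N Θ s)).const_add (Γ s)

end StripMap

theorem stripMap_metric_diagonal_general
    (n : ℕ) (a : ℝ)
    (Γ : ℝ → EuclideanSpace ℝ (Fin (n + 1)))
    (N : Fin n → ℝ → EuclideanSpace ℝ (Fin (n + 1)))
    (k Θ : ℝ → Fin n → ℝ)
    (hΓ : Differentiable ℝ Γ)
    (hON : ∀ s : ℝ, Orthonormal ℝ
      (Fin.cons (deriv Γ s) (fun j => N j s) : Fin (n + 1) → EuclideanSpace ℝ (Fin (n + 1))))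
    (hΘlip : ∀ j, ∃ L : NNReal, LipschitzWith L fun s => Θ s j)
    (hΘunit : ∀ s, ∑ j, Θ s j ^ 2 = 1)
    (hode : ∀ᵐ s ∂(volume : Measure ℝ),
      HasDerivAt (deriv Γ) (∑ j, k s j • N j s) s ∧
        ∀ j, HasDerivAt (N j) ((-k s j) • deriv Γ s) s) :
    ∀ᵐ s ∂(volume : Measure ℝ), ∀ t ∈ Ioo (-a) a,
      HasDerivAt (fun u => stripMap n Γ N Θ u t)
        ((1 - t * kdot n k Θ s) • deriv Γ s
          + t • ∑ j, deriv (fun u => Θ u j) s • N j s) s ∧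
      HasDerivAt (fun v => stripMap n Γ N Θ s v) (NTheta n N Θ s) t ∧
      inner ℝ ((1 - t * kdot n k Θ s) • deriv Γ s
          + t • ∑ j, deriv (fun u => Θ u j) s • N j s) (NTheta n N Θ s) = (0 : ℝ) ∧
      ‖NTheta n N Θ s‖ = 1 ∧
      ‖(1 - t * kdot n k Θ s) • deriv Γ s
          + t • ∑ j, deriv (fun u => Θ u j) s • N j s‖ ^ 2 = fJac n k Θ s t ^ 2 := by
  have hΘdiff : ∀ᵐ s, ∀ j, DifferentiableAt ℝ (fun u => Θ u j) s :=
    ae_all_iff.2 fun j => (hΘlip j).choose_spec.ae_differentiableAt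
  filter_upwards [hode, hΘdiff] with s ⟨_, hN⟩ hΘ t _
  have hNΘ : NTheta n N Θ s = (0 : ℝ) • deriv Γ s + ∑ j, Θ s j • N j s := by
    rw [zero_smul, zero_add, NTheta]
  have hW : t • ∑ j, deriv (fun u => Θ u j) s • N j s
      = ∑ j, (t * deriv (fun u => Θ u j) s) • N j s := by
    simp only [Finset.smul_sum, smul_smul]
  have hΘΘ' := sum_mul_deriv_eq_zero_of_sum_sq_eq_const hΘunit hΘ
  have hnorm : ‖(1 - t * kdot n k Θ s) • deriv Γ s
      + t • ∑ j, deriv (fun u => Θ u j) s • N j s‖ ^ 2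
      = (1 - t * kdot n k Θ s) ^ 2 + t ^ 2 * twistSq n Θ s := by
    rw [← real_inner_self_eq_norm_sq, hW, (hON s).inner_cons_combination, twistSq,
      Finset.mul_sum]
    simp only [sq, mul_mul_mul_comm]
  refine ⟨hasDerivAt_stripMap_fst (hΓ s) hN hΘ t, hasDerivAt_stripMap_snd t, ?_, ?_, ?_⟩
  · rw [hW, hNΘ, (hON s).inner_cons_combination]
    simp only [mul_assoc, ← Finset.mul_sum, hΘΘ', mul_zero, add_zero]
  · rw [norm_eq_sqrt_real_inner, hNΘ, (hON s).inner_cons_combination]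
    simp [← sq, hΘunit]
  · rw [fJac, ← hnorm, Real.sq_sqrt (sq_nonneg _)]

/-- The induced metric of the strip map is diagonal with Jacobian `f`. -/
theorem stripMap_metric_diagonal
    (n : ℕ) (hn : 1 ≤ n) (a : ℝ) (ha : 0 < a)
    (Γ : ℝ → EuclideanSpace ℝ (Fin (n + 1)))
    (N : Fin n → ℝ → EuclideanSpace ℝ (Fin (n + 1)))
    (k Θ : ℝ → Fin n → ℝ)
    (hΓ : Differentiable ℝ Γ)
    (hT : LocallyLipschitz (deriv Γ))
    (hTunit : ∀ s, ‖deriv Γ s‖ = 1)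
    (hNlip : ∀ j, LocallyLipschitz (N j))
    (hON : ∀ s : ℝ, Orthonormal ℝ
      (Fin.cons (deriv Γ s) (fun j => N j s) : Fin (n + 1) → EuclideanSpace ℝ (Fin (n + 1))))
    (hkm : ∀ j, Measurable fun s => k s j)
    (hkb : ∀ r : ℝ, ∃ C : ℝ, ∀ s : ℝ, |s| ≤ r → ∀ j, |k s j| ≤ C)
    (hΘlip : ∀ j, ∃ L : NNReal, LipschitzWith L fun s => Θ s j)
    (hΘunit : ∀ s, ∑ j, Θ s j ^ 2 = 1)
    (hode : ∀ᵐ s ∂(volume : Measure ℝ),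
      HasDerivAt (deriv Γ) (∑ j, k s j • N j s) s ∧
        ∀ j, HasDerivAt (N j) ((-k s j) • deriv Γ s) s) :
    ∀ᵐ s ∂(volume : Measure ℝ), ∀ t ∈ Ioo (-a) a,
      HasDerivAt (fun u => stripMap n Γ N Θ u t)
        ((1 - t * kdot n k Θ s) • deriv Γ s
          + t • ∑ j, deriv (fun u => Θ u j) s • N j s) s ∧
      HasDerivAt (fun v => stripMap n Γ N Θ s v) (NTheta n N Θ s) t ∧
      inner ℝ ((1 - t * kdot n k Θ s) • deriv Γ s
          + t • ∑ j, deriv (fun u => Θ u j) s • N j s) (NTheta n N Θ s) = (0 : ℝ) ∧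
      ‖NTheta n N Θ s‖ = 1 ∧
      ‖(1 - t * kdot n k Θ s) • deriv Γ s
          + t • ∑ j, deriv (fun u => Θ u j) s • N j s‖ ^ 2 = fJac n k Θ s t ^ 2 :=
  stripMap_metric_diagonal_general n a Γ N k Θ hΓ hON hΘlip hΘunit hode
end
end

section
/- Suppose Assumption (A) holds and Θ is constant, so that f(s,t) = 1 − t·(k(s)·Θ(s)). Let φ₁ ∈ C_c^∞(ℝ) be real-valued with 0 ≤ φ₁ ≤ 1, φ₁ = 1 on [−1,1] and φ₁ = 0 outside [−2,2]; set φ_m(s) := φ₁(s/m), χ₁(t) := a^{−1/2} cos(√E₁ · t) and ψ_m(s,t) := φ_m(s)χ₁(t). Then for every m one has h[ψ_m] − E₁‖ψ_m‖_H² = ∫_{Ω₀} φ_m'(s)² χ₁(t)² / f(s,t) ds dt, and this quantity tends to 0 as m → ∞. -/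
open MeasureTheory Real Set Filter

noncomputable section

/-- The geodesic curvature `k·Θ` for a constant twisting vector `Θ`. -/
def kc (n : ℕ) (k : ℝ → Fin n → ℝ) (c : Fin n → ℝ) (s : ℝ) : ℝ := ∑ j, k s j * c j

/-- The Jacobian of an untwisted strip: `f(s,t) = 1 - t k(s)·Θ`. -/
def fB (n : ℕ) (k : ℝ → Fin n → ℝ) (c : Fin n → ℝ) (s t : ℝ) : ℝ := 1 - t * kc n k c s

/-- The quadratic form `h[ψ]` of an untwisted strip (real-valued test functions). -/
def formB (n : ℕ) (a : ℝ) (k : ℝ → Fin n → ℝ) (c : Fin n → ℝ) (ψ : ℝ × ℝ → ℝ) : ℝ :=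
  ∫ p in strip0 a,
    ((deriv (fun u => ψ (u, p.2)) p.1) ^ 2 / fB n k c p.1 p.2
      + (deriv (fun v => ψ (p.1, v)) p.2) ^ 2 * fB n k c p.1 p.2)

/-- `‖ψ‖_H²` of an untwisted strip (real-valued test functions). -/
def normBsq (n : ℕ) (a : ℝ) (k : ℝ → Fin n → ℝ) (c : Fin n → ℝ) (ψ : ℝ × ℝ → ℝ) : ℝ :=
  ∫ p in strip0 a, (ψ p) ^ 2 * fB n k c p.1 p.2

/-- The first transverse eigenfunction `χ₁(t) = a^{-1/2} cos(√E₁ t)`. -/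
def chi1 (a t : ℝ) : ℝ := (Real.sqrt a)⁻¹ * Real.cos (Real.sqrt ((π / (2 * a)) ^ 2) * t)

/-- The trial function `ψ_m(s,t) = φ₁(s/m) χ₁(t)`. -/
def psiM (φ₁ : ℝ → ℝ) (a : ℝ) (m : ℕ) (p : ℝ × ℝ) : ℝ := φ₁ (p.1 / m) * chi1 a p.2

/-- For a purely bent strip, the shifted form evaluated on the mollified
transverse ground state reduces to the longitudinal kinetic energy, and tends to zero. -/
theorem purely_bent_trial_function_energy
    (n : ℕ) (hn : 1 ≤ n) (a : ℝ) (ha : 0 < a)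
    (k : ℝ → Fin n → ℝ) (c : Fin n → ℝ)
    (hkm : ∀ j, Measurable fun s => k s j)
    (hkb : ∀ r : ℝ, ∃ C : ℝ, ∀ s : ℝ, |s| ≤ r → ∀ j, |k s j| ≤ C)
    (hcunit : ∑ j, c j ^ 2 = 1)
    -- Assumption (A)
    (C : ℝ) (hC : ∀ᵐ s ∂(volume : Measure ℝ), |kc n k c s| ≤ C) (haC : a * C < 1)
    (φ₁ : ℝ → ℝ)
    (hφsmooth : ContDiff ℝ (⊤ : ℕ∞) φ₁)
    (hφrange : ∀ s, 0 ≤ φ₁ s ∧ φ₁ s ≤ 1)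
    (hφone : ∀ s ∈ Icc (-1 : ℝ) 1, φ₁ s = 1)
    (hφzero : ∀ s ∉ Icc (-2 : ℝ) 2, φ₁ s = 0) :
    (∀ m : ℕ, 1 ≤ m →
      formB n a k c (psiM φ₁ a m) - (π / (2 * a)) ^ 2 * normBsq n a k c (psiM φ₁ a m)
        = ∫ p in strip0 a,
            (deriv (fun u => φ₁ (u / m)) p.1) ^ 2 * chi1 a p.2 ^ 2 / fB n k c p.1 p.2) ∧
    Tendsto
      (fun m : ℕ =>
        formB n a k c (psiM φ₁ a m) - (π / (2 * a)) ^ 2 * normBsq n a k c (psiM φ₁ a m))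
      atTop (nhds 0) := by
  have hω : 0 < π / (2 * a) := by positivity
  set ω : ℝ := π / (2 * a) with hωdef
  have hC0 : 0 ≤ C := by
    have hne : (volume : Measure ℝ) ≠ 0 := by
      intro h
      have h2 := congrArg (fun μ : Measure ℝ => μ (Ioo (0 : ℝ) 1)) h
      simp [Real.volume_Ioo] at h2
    haveI : (ae (volume : Measure ℝ)).NeBot := ae_neBot.2 hne
    rcases hC.exists with ⟨s, hs⟩
    exact (abs_nonneg _).trans hs
  have h1 : (0 : ℝ) < 1 - a * C := by linarith
  have haC0 : 0 ≤ a * C := mul_nonneg ha.le hC0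
  have hκmeas : Measurable (kc n k c) := by
    unfold kc
    exact Finset.measurable_sum _ fun j _ => (hkm j).mul measurable_const
  -- measures
  set ν : Measure ℝ := volume.restrict (Ioo (-a) a) with hνdef
  haveI hνfin : IsFiniteMeasure ν := by
    constructor
    rw [hνdef, Measure.restrict_apply_univ, Real.volume_Ioo]
    exact ENNReal.ofReal_lt_top
  set μ : Measure (ℝ × ℝ) := (volume : Measure ℝ).prod ν with hμdef
  have hμ : (volume : Measure (ℝ × ℝ)).restrict (strip0 a) = μ := by
    rw [hμdef, hνdef, strip0, Measure.volume_eq_prod, ← Measure.prod_restrict,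
      Measure.restrict_univ]
  -- a.e. facts
  have haeκ : ∀ᵐ p : ℝ × ℝ ∂μ, |kc n k c p.1| ≤ C := by
    rw [ae_iff] at hC ⊢
    have hset : {p : ℝ × ℝ | ¬|kc n k c p.1| ≤ C}
        = {s : ℝ | ¬|kc n k c s| ≤ C} ×ˢ (univ : Set ℝ) := by
      ext p; simp [Set.mem_prod]
    rw [hset, hμdef, Measure.prod_prod, hC, zero_mul]
  have haet : ∀ᵐ p : ℝ × ℝ ∂μ, p.2 ∈ Ioo (-a) a := by
    rw [ae_iff]
    have hset : {p : ℝ × ℝ | ¬ p.2 ∈ Ioo (-a) a}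
        = (univ : Set ℝ) ×ˢ (Ioo (-a) a)ᶜ := by
      ext p; simp [Set.mem_prod]
    rw [hset, hμdef, Measure.prod_prod, hνdef,
      Measure.restrict_apply measurableSet_Ioo.compl, compl_inter_self, measure_empty, mul_zero]
  have haeF : ∀ᵐ p : ℝ × ℝ ∂μ,
      1 - a * C ≤ fB n k c p.1 p.2 ∧ fB n k c p.1 p.2 ≤ 1 + a * C := by
    filter_upwards [haeκ, haet] with p hk ht
    have h2 : |p.2| ≤ a := le_of_lt (abs_lt.mpr ⟨ht.1, ht.2⟩)
    have h3 : |p.2 * kc n k c p.1| ≤ a * C := by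
      rw [abs_mul]; exact mul_le_mul h2 hk (abs_nonneg _) ha.le
    rw [abs_le] at h3
    constructor <;> simp only [fB] <;> linarith [h3.1, h3.2]
  -- χ₁ rewriting and bounds
  have hsq : Real.sqrt (ω ^ 2) = ω := Real.sqrt_sq hω.le
  have hchi : ∀ t, chi1 a t = (Real.sqrt a)⁻¹ * Real.cos (ω * t) := by
    intro t; rw [chi1, ← hωdef, hsq]
  have hsa : ((Real.sqrt a)⁻¹) ^ 2 = a⁻¹ := by
    rw [inv_pow, Real.sq_sqrt ha.le]
  have hχsq : ∀ t, ((Real.sqrt a)⁻¹ * Real.cos (ω * t)) ^ 2 ≤ a⁻¹ := by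
    intro t
    have h2 : ((Real.sqrt a)⁻¹ * Real.cos (ω * t)) ^ 2
        = ((Real.sqrt a)⁻¹) ^ 2 * Real.cos (ω * t) ^ 2 := by ring
    rw [h2, hsa]
    calc a⁻¹ * Real.cos (ω * t) ^ 2 ≤ a⁻¹ * 1 :=
          mul_le_mul_of_nonneg_left (Real.cos_sq_le_one _) (inv_nonneg.2 ha.le)
      _ = a⁻¹ := mul_one _
  -- transverse energy density
  set g2 : ℝ → ℝ := fun t =>
    (-((Real.sqrt a)⁻¹ * (Real.sin (ω * t) * ω))) ^ 2
      - ω ^ 2 * ((Real.sqrt a)⁻¹ * Real.cos (ω * t)) ^ 2 with hg2def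
  have hg2 : ∀ t, g2 t = -(a⁻¹ * ω ^ 2) * Real.cos (2 * ω * t) := by
    intro t
    rw [hg2def]
    have hc2 : Real.cos (2 * ω * t) = 2 * Real.cos (ω * t) ^ 2 - 1 := by
      rw [show 2 * ω * t = 2 * (ω * t) by ring, Real.cos_two_mul]
    rw [hc2]
    have hpyth := Real.sin_sq_add_cos_sq (ω * t)
    linear_combination (ω ^ 2 * (Real.sin (ω * t) ^ 2 - Real.cos (ω * t) ^ 2)) * hsa
      + a⁻¹ * ω ^ 2 * hpyth
  have hg2b : ∀ t, |g2 t| ≤ a⁻¹ * ω ^ 2 := by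
    intro t
    rw [hg2 t, abs_mul, abs_neg,
      abs_of_nonneg (mul_nonneg (inv_nonneg.2 ha.le) (sq_nonneg ω))]
    calc a⁻¹ * ω ^ 2 * |Real.cos (2 * ω * t)| ≤ a⁻¹ * ω ^ 2 * 1 :=
          mul_le_mul_of_nonneg_left (Real.abs_cos_le_one _)
            (mul_nonneg (inv_nonneg.2 ha.le) (sq_nonneg ω))
      _ = a⁻¹ * ω ^ 2 := mul_one _
  -- the two transverse integrals vanish
  have hmaa : (-a : ℝ) ≤ a := by linarith
  have h2ω : (2 * ω : ℝ) ≠ 0 := ne_of_gt (by linarith)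
  have hcosI : (∫ t, Real.cos (2 * ω * t) ∂ν) = 0 := by
    rw [hνdef, ← MeasureTheory.integral_Ioc_eq_integral_Ioo,
      ← intervalIntegral.integral_of_le hmaa,
      intervalIntegral.integral_comp_mul_left (fun x => Real.cos x) h2ω,
      integral_cos]
    rw [show 2 * ω * -a = -(2 * ω * a) by ring, show 2 * ω * a = π by rw [hωdef]; field_simp]
    simp [Real.sin_pi]
  have htcosI : (∫ t, t * Real.cos (2 * ω * t) ∂ν) = 0 := by
    rw [hνdef, ← MeasureTheory.integral_Ioc_eq_integral_Ioo,
      ← intervalIntegral.integral_of_le hmaa]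
    have h2 := intervalIntegral.integral_comp_neg (a := -a) (b := a)
      (fun t => t * Real.cos (2 * ω * t))
    simp only [neg_neg] at h2
    have h2' : (∫ x in (-a)..a, -(x * Real.cos (2 * ω * x)))
        = ∫ x in (-a)..a, x * Real.cos (2 * ω * x) := by
      rw [← h2]
      apply intervalIntegral.integral_congr
      intro x _
      simp only
      rw [show 2 * ω * -x = -(2 * ω * x) by ring, Real.cos_neg]
      ring
    rw [intervalIntegral.integral_neg] at h2'
    linarith
  have hcos_int : Integrable (fun t => Real.cos (2 * ω * t)) ν := by
    rw [hνdef]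
    exact ((Real.continuous_cos.comp (continuous_const.mul continuous_id)).integrableOn_Icc).mono_set
      Ioo_subset_Icc_self
  have htcos_int : Integrable (fun t : ℝ => t * Real.cos (2 * ω * t)) ν := by
    rw [hνdef]
    exact ((continuous_id.mul
      (Real.continuous_cos.comp (continuous_const.mul continuous_id))).integrableOn_Icc).mono_set
      Ioo_subset_Icc_self
  have hInner : ∀ c0 : ℝ, (∫ t, g2 t * (1 - t * c0) ∂ν) = 0 := by
    intro c0
    have hcongr : (∫ t, g2 t * (1 - t * c0) ∂ν)
        = ∫ t, (-(a⁻¹ * ω ^ 2))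
            * (Real.cos (2 * ω * t) - c0 * (t * Real.cos (2 * ω * t))) ∂ν := by
      apply integral_congr_ae
      apply Eventually.of_forall
      intro t
      show g2 t * (1 - t * c0) = -(a⁻¹ * ω ^ 2) * (Real.cos (2 * ω * t) - c0 * (t * Real.cos (2 * ω * t)))
      rw [hg2 t]; ring
    rw [hcongr, MeasureTheory.integral_const_mul,
      integral_sub hcos_int (htcos_int.const_mul c0), MeasureTheory.integral_const_mul,
      hcosI, htcosI]
    ring
  -- global bound for the derivative of φ₁
  have hd₁zero : ∀ x ∉ Icc (-2 : ℝ) 2, deriv φ₁ x = 0 := by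
    intro x hx
    have hev : φ₁ =ᶠ[nhds x] fun _ => 0 := by
      filter_upwards [isClosed_Icc.isOpen_compl.mem_nhds hx] with y hy using hφzero y hy
    rw [hev.deriv_eq]
    simp
  have hdcont₁ : Continuous (deriv φ₁) := hφsmooth.continuous_deriv (by simp)
  obtain ⟨M₀, hM₀⟩ :=
    (isCompact_Icc (a := (-2 : ℝ)) (b := 2)).exists_bound_of_continuousOn hdcont₁.continuousOn
  set M : ℝ := max M₀ 0 with hMdef
  have hM : ∀ x, |deriv φ₁ x| ≤ M := by
    intro x
    by_cases hx : x ∈ Icc (-2 : ℝ) 2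
    · exact (hM₀ x hx).trans (le_max_left _ _)
    · rw [hd₁zero x hx, abs_zero]; exact le_max_right M₀ 0
  have hM0 : 0 ≤ M := le_max_right _ _
  set B1 : ℝ := a⁻¹ * (1 - a * C)⁻¹ with hB1def
  have hB1nn : 0 ≤ B1 := mul_nonneg (inv_nonneg.2 ha.le) (inv_nonneg.2 h1.le)
  set K : ℝ := 8 * a * M ^ 2 * B1 with hKdef
  -- a.e. bounds for the three transverse factors
  have haeb1 : ∀ᵐ p : ℝ × ℝ ∂μ,
      |((Real.sqrt a)⁻¹ * Real.cos (ω * p.2)) ^ 2 / fB n k c p.1 p.2| ≤ B1 := by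
    filter_upwards [haeF] with p hF
    have hFpos : 0 < fB n k c p.1 p.2 := lt_of_lt_of_le h1 hF.1
    rw [abs_div, abs_of_nonneg (sq_nonneg _), abs_of_pos hFpos]
    have hle : ((Real.sqrt a)⁻¹ * Real.cos (ω * p.2)) ^ 2 / fB n k c p.1 p.2
        ≤ a⁻¹ / (1 - a * C) :=
      div_le_div₀ (inv_nonneg.2 ha.le) (hχsq p.2) h1 hF.1
    rw [hB1def]
    simpa [div_eq_mul_inv] using hle
  have haeb2 : ∀ᵐ p : ℝ × ℝ ∂μ,
      |g2 p.2 * fB n k c p.1 p.2| ≤ (a⁻¹ * ω ^ 2) * (1 + a * C) := by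
    filter_upwards [haeF] with p hF
    rw [abs_mul]
    have hFabs : |fB n k c p.1 p.2| ≤ 1 + a * C :=
      abs_le.mpr ⟨by linarith [hF.1], hF.2⟩
    exact mul_le_mul (hg2b p.2) hFabs (abs_nonneg _)
      (mul_nonneg (inv_nonneg.2 ha.le) (sq_nonneg ω))
  have haeb3 : ∀ᵐ p : ℝ × ℝ ∂μ,
      |((Real.sqrt a)⁻¹ * Real.cos (ω * p.2)) ^ 2 * fB n k c p.1 p.2| ≤ a⁻¹ * (1 + a * C) := by
    filter_upwards [haeF] with p hF
    rw [abs_mul, abs_of_nonneg (sq_nonneg _)]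
    have hFabs : |fB n k c p.1 p.2| ≤ 1 + a * C :=
      abs_le.mpr ⟨by linarith [hF.1], hF.2⟩
    exact mul_le_mul (hχsq p.2) hFabs (abs_nonneg _) (inv_nonneg.2 ha.le)
  -- measurability of the transverse factors
  have hFmeas : Measurable (fun p : ℝ × ℝ => fB n k c p.1 p.2) := by
    simp only [fB]
    exact measurable_const.sub (measurable_snd.mul (hκmeas.comp measurable_fst))
  have hχcont : Continuous (fun p : ℝ × ℝ => ((Real.sqrt a)⁻¹ * Real.cos (ω * p.2)) ^ 2) := by
    fun_prop
  have hg2cont : Continuous g2 := by rw [hg2def]; fun_prop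
  have hr1m : AEStronglyMeasurable
      (fun p : ℝ × ℝ => ((Real.sqrt a)⁻¹ * Real.cos (ω * p.2)) ^ 2 / fB n k c p.1 p.2) μ :=
    (hχcont.measurable.div hFmeas).aestronglyMeasurable
  have hr2m : AEStronglyMeasurable (fun p : ℝ × ℝ => g2 p.2 * fB n k c p.1 p.2) μ :=
    (((hg2cont.comp continuous_snd).measurable).mul hFmeas).aestronglyMeasurable
  have hr3m : AEStronglyMeasurable
      (fun p : ℝ × ℝ => ((Real.sqrt a)⁻¹ * Real.cos (ω * p.2)) ^ 2 * fB n k c p.1 p.2) μ :=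
    (hχcont.measurable.mul hFmeas).aestronglyMeasurable
  -- generic integrability helper
  have hint : ∀ (q : ℝ → ℝ) (r : ℝ × ℝ → ℝ) (B : ℝ), Continuous q → HasCompactSupport q →
      AEStronglyMeasurable r μ → (∀ᵐ p ∂μ, |r p| ≤ B) →
      Integrable (fun p : ℝ × ℝ => q p.1 * r p) μ := by
    intro q r B hqc hqs hrm hrB
    have hq : Integrable q (volume : Measure ℝ) := hqc.integrable_of_hasCompactSupport hqs
    have hdom : Integrable (fun p : ℝ × ℝ => |q p.1| * B) μ := by
      rw [hμdef]
      exact hq.abs.mul_prod (integrable_const B)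
    refine hdom.mono' ((hqc.comp continuous_fst).aestronglyMeasurable.mul hrm) ?_
    filter_upwards [hrB] with p hp
    rw [Real.norm_eq_abs, abs_mul]
    exact mul_le_mul_of_nonneg_left hp (abs_nonneg _)
  -- the main computation for each m ≥ 1
  have key : ∀ m : ℕ, 1 ≤ m →
      (formB n a k c (psiM φ₁ a m) - ω ^ 2 * normBsq n a k c (psiM φ₁ a m)
        = ∫ p in strip0 a,
            (deriv (fun u => φ₁ (u / (m : ℝ))) p.1) ^ 2 * chi1 a p.2 ^ 2 / fB n k c p.1 p.2) ∧
      ‖formB n a k c (psiM φ₁ a m) - ω ^ 2 * normBsq n a k c (psiM φ₁ a m)‖ ≤ K / m := by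
    intro m hm
    have hm0 : (0 : ℝ) < (m : ℝ) := by
      have : (1 : ℝ) ≤ (m : ℝ) := by exact_mod_cast hm
      linarith
    -- derivative of the longitudinal cut-off
    have hdm : ∀ s : ℝ, HasDerivAt (fun u => φ₁ (u / (m : ℝ)))
        (deriv φ₁ (s / m) * (1 / m)) s := by
      intro s
      have h1' : HasDerivAt (fun u : ℝ => u / (m : ℝ)) (1 / m) s := by
        simpa using (hasDerivAt_id s).div_const (m : ℝ)
      exact ((hφsmooth.differentiable (by simp) (s / (m : ℝ))).hasDerivAt).comp s h1'
    have hdφm : ∀ s, deriv (fun u => φ₁ (u / (m : ℝ))) s = deriv φ₁ (s / m) * (1 / m) :=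
      fun s => (hdm s).deriv
    have hdbound : ∀ s, |deriv (fun u => φ₁ (u / (m : ℝ))) s| ≤ M / m := by
      intro s
      rw [hdφm s, abs_mul, abs_of_nonneg (by positivity : (0 : ℝ) ≤ 1 / (m : ℝ))]
      calc |deriv φ₁ (s / m)| * (1 / m) ≤ M * (1 / m) :=
            mul_le_mul_of_nonneg_right (hM _) (by positivity)
        _ = M / m := by ring
    have hdzero : ∀ s : ℝ, s ∉ Icc (-(2 * (m : ℝ))) (2 * m) →
        deriv (fun u => φ₁ (u / (m : ℝ))) s = 0 := by
      intro s hs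
      rw [hdφm s]
      have hnot : s / (m : ℝ) ∉ Icc (-2 : ℝ) 2 := by
        simp only [mem_Icc, not_and_or, not_le] at hs ⊢
        rcases hs with h | h
        · left; rw [div_lt_iff₀ hm0]; linarith
        · right; rw [lt_div_iff₀ hm0]; linarith
      rw [hd₁zero _ hnot, zero_mul]
    have hφmzero : ∀ s : ℝ, s ∉ Icc (-(2 * (m : ℝ))) (2 * m) → φ₁ (s / (m : ℝ)) = 0 := by
      intro s hs
      have hnot : s / (m : ℝ) ∉ Icc (-2 : ℝ) 2 := by
        simp only [mem_Icc, not_and_or, not_le] at hs ⊢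
        rcases hs with h | h
        · left; rw [div_lt_iff₀ hm0]; linarith
        · right; rw [lt_div_iff₀ hm0]; linarith
      exact hφzero _ hnot
    -- longitudinal factors
    have hdcont : Continuous (fun s : ℝ => deriv (fun u => φ₁ (u / (m : ℝ))) s) := by
      have he : (fun s : ℝ => deriv (fun u => φ₁ (u / (m : ℝ))) s)
          = fun s => deriv φ₁ (s / (m : ℝ)) * (1 / (m : ℝ)) := funext hdφm
      rw [he]
      exact (hdcont₁.comp (continuous_id.div_const _)).mul continuous_const
    have hq1c : Continuous (fun s : ℝ => (deriv (fun u => φ₁ (u / (m : ℝ))) s) ^ 2) :=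
      hdcont.pow 2
    have hq1s : HasCompactSupport (fun s : ℝ => (deriv (fun u => φ₁ (u / (m : ℝ))) s) ^ 2) :=
      HasCompactSupport.intro isCompact_Icc fun x hx => by
        rw [hdzero x hx]; ring
    have hq2c : Continuous (fun s : ℝ => (φ₁ (s / (m : ℝ))) ^ 2) :=
      (hφsmooth.continuous.comp (continuous_id.div_const _)).pow 2
    have hq2s : HasCompactSupport (fun s : ℝ => (φ₁ (s / (m : ℝ))) ^ 2) :=
      HasCompactSupport.intro isCompact_Icc fun x hx => by
        rw [hφmzero x hx]; ring
    -- the three pieces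
    set A1 : ℝ × ℝ → ℝ := fun p =>
      (deriv (fun u => φ₁ (u / (m : ℝ))) p.1) ^ 2
        * (((Real.sqrt a)⁻¹ * Real.cos (ω * p.2)) ^ 2 / fB n k c p.1 p.2) with hA1def
    set A2 : ℝ × ℝ → ℝ := fun p =>
      (φ₁ (p.1 / (m : ℝ))) ^ 2 * (g2 p.2 * fB n k c p.1 p.2) with hA2def
    set A3 : ℝ × ℝ → ℝ := fun p =>
      (φ₁ (p.1 / (m : ℝ))) ^ 2
        * (((Real.sqrt a)⁻¹ * Real.cos (ω * p.2)) ^ 2 * fB n k c p.1 p.2) with hA3def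
    have hA1 : Integrable A1 μ := hint _ _ _ hq1c hq1s hr1m haeb1
    have hA2 : Integrable A2 μ := hint _ _ _ hq2c hq2s hr2m haeb2
    have hA3 : Integrable A3 μ := hint _ _ _ hq2c hq2s hr3m haeb3
    -- pointwise derivative computations
    have hchid : ∀ t : ℝ, HasDerivAt (chi1 a)
        (-((Real.sqrt a)⁻¹ * (Real.sin (ω * t) * ω))) t := by
      intro t
      have h1' : HasDerivAt (fun v : ℝ => ω * v) (ω * 1) t := (hasDerivAt_id t).const_mul ω
      have h2' : HasDerivAt (fun v : ℝ => Real.cos (ω * v)) (-Real.sin (ω * t) * (ω * 1)) t :=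
        (Real.hasDerivAt_cos (ω * t)).comp t h1'
      have h3' := h2'.const_mul ((Real.sqrt a)⁻¹)
      have h4' : chi1 a = fun v => (Real.sqrt a)⁻¹ * Real.cos (ω * v) := funext hchi
      rw [h4']
      exact h3'.congr_deriv (by ring)
    have hd1 : ∀ s t : ℝ, deriv (fun u => psiM φ₁ a m (u, t)) s
        = deriv (fun u => φ₁ (u / (m : ℝ))) s * chi1 a t := by
      intro s t
      have he : (fun u => psiM φ₁ a m (u, t)) = fun u => φ₁ (u / (m : ℝ)) * chi1 a t := by
        funext u; simp [psiM]
      rw [he, deriv_mul_const_field]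
    have hd2 : ∀ s t : ℝ, deriv (fun v => psiM φ₁ a m (s, v)) t
        = φ₁ (s / (m : ℝ)) * (-((Real.sqrt a)⁻¹ * (Real.sin (ω * t) * ω))) := by
      intro s t
      have he : (fun v => psiM φ₁ a m (s, v)) = fun v => φ₁ (s / (m : ℝ)) * chi1 a v := by
        funext v; simp [psiM]
      rw [he, deriv_const_mul_field, (hchid t).deriv]
    -- rewrite the two quadratic forms
    have hform : formB n a k c (psiM φ₁ a m) = ∫ p, (A1 p + A2 p + ω ^ 2 * A3 p) ∂μ := by
      simp only [formB]
      rw [hμ]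
      apply integral_congr_ae
      apply Eventually.of_forall
      intro p
      dsimp only
      rw [hd1 p.1 p.2, hd2 p.1 p.2, hchi p.2]
      simp only [hA1def, hA2def, hA3def, hg2def]
      ring
    have hnorm : normBsq n a k c (psiM φ₁ a m) = ∫ p, A3 p ∂μ := by
      simp only [normBsq]
      rw [hμ]
      apply integral_congr_ae
      apply Eventually.of_forall
      intro p
      dsimp only
      simp only [psiM, hA3def]
      rw [hchi p.2]
      ring
    have hsum : (∫ p, (A1 p + A2 p + ω ^ 2 * A3 p) ∂μ)
        = (∫ p, A1 p ∂μ) + (∫ p, A2 p ∂μ) + ω ^ 2 * ∫ p, A3 p ∂μ := by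
      have hs1 : Integrable (fun p => A1 p + A2 p) μ := hA1.add hA2
      have hs2 : Integrable (fun p => ω ^ 2 * A3 p) μ := hA3.const_mul (ω ^ 2)
      rw [integral_add hs1 hs2, integral_add hA1 hA2, MeasureTheory.integral_const_mul]
    -- Fubini: the middle piece vanishes
    have hG2 : (∫ p, A2 p ∂μ) = 0 := by
      have hA2' : Integrable A2 ((volume : Measure ℝ).prod ν) := by rwa [← hμdef]
      rw [hμdef, MeasureTheory.integral_prod _ hA2']
      have hz : ∀ s : ℝ, (∫ t, A2 (s, t) ∂ν) = 0 := by
        intro s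
        have he : (fun t => A2 (s, t))
            = fun t => (φ₁ (s / (m : ℝ))) ^ 2 * (g2 t * (1 - t * kc n k c s)) := by
          funext t; simp only [hA2def, fB]
        rw [he, MeasureTheory.integral_const_mul, hInner (kc n k c s), mul_zero]
      calc (∫ s : ℝ, ∫ t, A2 (s, t) ∂ν) = ∫ _ : ℝ, (0 : ℝ) :=
            integral_congr_ae (Eventually.of_forall hz)
        _ = 0 := integral_zero _ _
    have hIdent : formB n a k c (psiM φ₁ a m) - ω ^ 2 * normBsq n a k c (psiM φ₁ a m)
        = ∫ p, A1 p ∂μ := by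
      rw [hform, hnorm, hsum, hG2]
      ring
    have hRHS : (∫ p in strip0 a,
        (deriv (fun u => φ₁ (u / (m : ℝ))) p.1) ^ 2 * chi1 a p.2 ^ 2 / fB n k c p.1 p.2)
        = ∫ p, A1 p ∂μ := by
      rw [hμ]
      apply integral_congr_ae
      apply Eventually.of_forall
      intro p
      dsimp only
      rw [hchi p.2]
      simp only [hA1def]
      ring
    -- the norm bound
    set S : Set (ℝ × ℝ) := (Icc (-(2 * (m : ℝ))) (2 * (m : ℝ))) ×ˢ (univ : Set ℝ) with hSdef
    have hSmeas : MeasurableSet S := measurableSet_Icc.prod MeasurableSet.univ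
    have hA1zero : ∀ p ∉ S, A1 p = 0 := by
      intro p hp
      have hp1 : p.1 ∉ Icc (-(2 * (m : ℝ))) (2 * (m : ℝ)) := by
        intro hmem
        exact hp (by rw [hSdef]; exact ⟨hmem, mem_univ _⟩)
      simp only [hA1def]
      rw [hdzero p.1 hp1]
      ring
    have hμS : μ S = ENNReal.ofReal (4 * (m : ℝ)) * ENNReal.ofReal (2 * a) := by
      rw [hSdef, hμdef, Measure.prod_prod, Real.volume_Icc, hνdef,
        Measure.restrict_apply_univ, Real.volume_Ioo]
      rw [show 2 * (m : ℝ) - -(2 * (m : ℝ)) = 4 * (m : ℝ) by ring,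
        show a - -a = 2 * a by ring]
    have hμSlt : μ S < ⊤ := by
      rw [hμS]
      exact ENNReal.mul_lt_top ENNReal.ofReal_lt_top ENNReal.ofReal_lt_top
    have htoReal : (μ S).toReal = 4 * (m : ℝ) * (2 * a) := by
      rw [hμS, ← ENNReal.ofReal_mul (by positivity), ENNReal.toReal_ofReal]
      positivity
    have hbound : ‖∫ p, A1 p ∂μ‖ ≤ ((M / m) ^ 2 * B1) * (μ S).toReal := by
      rw [← setIntegral_eq_integral_of_forall_compl_eq_zero hA1zero]
      apply norm_setIntegral_le_of_norm_le_const_ae hμSlt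
      filter_upwards [ae_restrict_of_ae haeb1] with p hp
      rw [Real.norm_eq_abs]
      simp only [hA1def]
      rw [abs_mul]
      have h1' : |(deriv (fun u => φ₁ (u / (m : ℝ))) p.1) ^ 2| ≤ (M / m) ^ 2 := by
        rw [abs_of_nonneg (sq_nonneg _)]
        have := abs_le.1 (hdbound p.1)
        exact sq_le_sq' this.1 this.2
      exact mul_le_mul h1' hp (abs_nonneg _) (sq_nonneg _)
    have hfinal : ((M / m) ^ 2 * B1) * (4 * (m : ℝ) * (2 * a)) = K / m := by
      rw [hKdef]
      field_simp
      ring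
    refine ⟨hIdent.trans hRHS.symm, ?_⟩
    rw [hIdent]
    calc ‖∫ p, A1 p ∂μ‖ ≤ ((M / m) ^ 2 * B1) * (μ S).toReal := hbound
      _ = K / m := by rw [htoReal, hfinal]
  constructor
  · intro m hm
    exact (key m hm).1
  · apply squeeze_zero_norm' ?_ (tendsto_const_div_atTop_nhds_zero_nat K)
    filter_upwards [eventually_ge_atTop 1] with m hm using (key m hm).2
end
end

section
/- Suppose Assumption (A) holds and Θ is constant, so that f(s,t) = 1 − t·(k(s)·Θ(s)). Let η ∈ C_c^∞(ℝ) be real-valued, let χ₁(t) := a^{−1/2} cos(√E₁ · t), let φ(s,t) := η(s)·t·χ₁(t), and let ψ(s,t) := ζ(s)χ₁(t) where ζ ∈ C_c^∞(ℝ) satisfies ζ = 1 on the support of η. Then the shifted sesquilinear form evaluates to ∫_{Ω₀} ( ∂₁ψ(s,t)∂₁φ(s,t)/f(s,t) + ∂₂ψ(s,t)∂₂φ(s,t) f(s,t) − E₁ ψ(s,t)φ(s,t) f(s,t) ) ds dt = −(1/2) ∫_ℝ η(s)·(k(s)·Θ)(s) ds. -/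
open MeasureTheory Real Set Filter Topology

noncomputable section

lemma aux_deriv_zero {f : ℝ → ℝ} (hf : Differentiable ℝ f) {s : ℝ}
    (hs : s ∉ interior (tsupport f)) : deriv f s = 0 := by
  by_cases hmem : s ∈ tsupport f
  · have hfs : f s = 0 := by
      by_contra h
      have hopen : IsOpen {x : ℝ | f x ≠ 0} := by
        have : IsClosed {x : ℝ | f x = 0} := isClosed_eq hf.continuous continuous_const
        simpa [compl_setOf] using this.isOpen_compl
      exact hs (interior_maximal (subset_tsupport f) hopen h)
    have hcl : s ∈ closure ((tsupport f)ᶜ) := by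
      rw [closure_compl]; exact hs
    have hne : (𝓝[(tsupport f)ᶜ] s).NeBot := mem_closure_iff_nhdsWithin_neBot.mp hcl
    have hle : 𝓝[(tsupport f)ᶜ] s ≤ 𝓝[≠] s := by
      apply nhdsWithin_mono
      intro x hx
      simp only [Set.mem_compl_iff, Set.mem_singleton_iff]
      rintro rfl; exact hx hmem
    have h1 : Tendsto (slope f s) (𝓝[(tsupport f)ᶜ] s) (𝓝 (deriv f s)) :=
      (hasDerivAt_iff_tendsto_slope.mp (hf s).hasDerivAt).mono_left hle
    have h2 : Tendsto (slope f s) (𝓝[(tsupport f)ᶜ] s) (𝓝 0) := by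
      refine Tendsto.congr' ?_ tendsto_const_nhds
      filter_upwards [self_mem_nhdsWithin] with x hx
      simp [slope, image_eq_zero_of_notMem_tsupport hx, hfs]
    exact tendsto_nhds_unique h1 h2
  · have hev : f =ᶠ[𝓝 s] (fun _ => 0) := by
      have hmem' : (tsupport f)ᶜ ∈ 𝓝 s :=
        (isOpen_compl_iff.mpr (isClosed_tsupport f)).mem_nhds hmem
      filter_upwards [hmem'] with x hx
      exact image_eq_zero_of_notMem_tsupport hx
    rw [hev.deriv_eq]; simp

lemma hasDerivAt_K (r m t : ℝ) :
    HasDerivAt (fun t : ℝ => r ^ 2 * Real.cos (m * t) ^ 2 / 2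
        - r ^ 2 * m * (t * Real.sin (m * t) * Real.cos (m * t))
        - r ^ 2 * (Real.cos (m * t) ^ 2 - Real.sin (m * t) ^ 2) / 4)
      (-(r ^ 2 * m) * (Real.sin (m * t) * Real.cos (m * t))
        + r ^ 2 * m ^ 2 * (t * (Real.sin (m * t) ^ 2 - Real.cos (m * t) ^ 2))) t := by
  have hid : HasDerivAt (fun y : ℝ => m * y) m t := by
    simpa using (hasDerivAt_id t).const_mul m
  have hs := hid.sin
  have hc := hid.cos
  have h := ((((hc.pow 2).const_mul (r ^ 2)).div_const 2).sub
      ((((hasDerivAt_id t).mul hs).mul hc).const_mul (r ^ 2 * m))).sub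
      ((((hc.pow 2).sub (hs.pow 2)).const_mul (r ^ 2)).div_const 4)
  exact h.congr_deriv (by simp; ring)

lemma hasDerivAt_H (r m : ℝ) (hm : m ≠ 0) (t : ℝ) :
    HasDerivAt (fun t : ℝ => r ^ 2 * (Real.sin (m * t) * Real.cos (m * t)) / (4 * m)
        - r ^ 2 * (t * (Real.cos (m * t) ^ 2 - Real.sin (m * t) ^ 2)) / 4
        - r ^ 2 * m * (t ^ 2 * Real.sin (m * t) * Real.cos (m * t)))
      (t * (-(r ^ 2 * m) * (Real.sin (m * t) * Real.cos (m * t))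
        + r ^ 2 * m ^ 2 * (t * (Real.sin (m * t) ^ 2 - Real.cos (m * t) ^ 2)))) t := by
  have hid : HasDerivAt (fun y : ℝ => m * y) m t := by
    simpa using (hasDerivAt_id t).const_mul m
  have hs := hid.sin
  have hc := hid.cos
  have h := ((((hs.mul hc).const_mul (r ^ 2)).div_const (4 * m)).sub
      ((((hasDerivAt_id t).mul ((hc.pow 2).sub (hs.pow 2))).const_mul (r ^ 2)).div_const 4)).sub
      ((((hasDerivAt_pow 2 t).mul hs).mul hc).const_mul (r ^ 2 * m))
  exact h.congr_deriv (by simp; field_simp; ring)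

/-- Evaluation of the shifted sesquilinear form at the asymmetric
perturbation `φ(s,t) = η(s) t χ₁(t)` against `ψ(s,t) = ζ(s) χ₁(t)`. -/
theorem purely_bent_cross_term
    (n : ℕ) (hn : 1 ≤ n) (a : ℝ) (ha : 0 < a)
    (k : ℝ → Fin n → ℝ) (c : Fin n → ℝ)
    (hkm : ∀ j, Measurable fun s => k s j)
    (hkb : ∀ r : ℝ, ∃ C : ℝ, ∀ s : ℝ, |s| ≤ r → ∀ j, |k s j| ≤ C)
    (hcunit : ∑ j, c j ^ 2 = 1)
    -- Assumption (A)
    (C : ℝ) (hC : ∀ᵐ s ∂(volume : Measure ℝ), |kc n k c s| ≤ C) (haC : a * C < 1)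
    (η ζ : ℝ → ℝ)
    (hη : ContDiff ℝ (⊤ : ℕ∞) η) (hηsupp : HasCompactSupport η)
    (hζ : ContDiff ℝ (⊤ : ℕ∞) ζ) (hζsupp : HasCompactSupport ζ)
    (hζone : ∀ s ∈ tsupport η, ζ s = 1)
    (φ ψ : ℝ × ℝ → ℝ)
    (hφ : ∀ s t : ℝ, φ (s, t) = η s * (t * chi1 a t))
    (hψ : ∀ s t : ℝ, ψ (s, t) = ζ s * chi1 a t) :
    (∫ p in strip0 a,
      (deriv (fun u => ψ (u, p.2)) p.1 * deriv (fun u => φ (u, p.2)) p.1 / fB n k c p.1 p.2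
        + deriv (fun v => ψ (p.1, v)) p.2 * deriv (fun v => φ (p.1, v)) p.2 * fB n k c p.1 p.2
        - (π / (2 * a)) ^ 2 * ψ p * φ p * fB n k c p.1 p.2))
      = -(1 / 2) * ∫ s : ℝ, η s * kc n k c s := by
  have ha' : a ≠ 0 := ne_of_gt ha
  set m : ℝ := π / (2 * a) with hmdef
  have hm0 : 0 < m := by positivity
  have hsq : Real.sqrt ((π / (2 * a)) ^ 2) = m := by
    rw [Real.sqrt_sq hm0.le]
  set r : ℝ := (Real.sqrt a)⁻¹ with hrdef
  have hra : r ^ 2 * a = 1 := by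
    rw [hrdef, inv_pow, Real.sq_sqrt ha.le, inv_mul_cancel₀ ha']
  have hchi : ∀ t, chi1 a t = r * Real.cos (m * t) := by
    intro t; rw [chi1, hsq]
  have hηd : Differentiable ℝ η := hη.differentiable (by simp)
  have hζd : Differentiable ℝ ζ := hζ.differentiable (by simp)
  -- derivative of chi1
  have hchid : ∀ t, HasDerivAt (chi1 a) (r * (-Real.sin (m * t) * m)) t := by
    intro t
    have : chi1 a = fun t => r * Real.cos (m * t) := funext hchi
    rw [this]
    have hid : HasDerivAt (fun y : ℝ => m * y) m t := by
      simpa using (hasDerivAt_id t).const_mul m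
    exact hid.cos.const_mul r
  -- ζ' η' = 0 everywhere
  have hzero : ∀ s, deriv ζ s * deriv η s = 0 := by
    intro s
    by_cases hsi : s ∈ interior (tsupport η)
    · have : ζ =ᶠ[𝓝 s] (fun _ => 1) := by
        filter_upwards [isOpen_interior.mem_nhds hsi] with x hx
        exact hζone x (interior_subset hx)
      rw [this.deriv_eq]; simp
    · rw [aux_deriv_zero hηd hsi, mul_zero]
  -- ζ η = η
  have hζη : ∀ s, ζ s = 1 ∨ η s = 0 := by
    intro s
    by_cases h : η s = 0
    · exact Or.inr h
    · exact Or.inl (hζone s (subset_tsupport η h))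
  -- the transverse profile G
  set G : ℝ → ℝ := fun t => -(r ^ 2 * m) * (Real.sin (m * t) * Real.cos (m * t))
      + r ^ 2 * m ^ 2 * (t * (Real.sin (m * t) ^ 2 - Real.cos (m * t) ^ 2)) with hGdef
  have hGcont : Continuous G := by
    rw [hGdef]; fun_prop
  have hGcont2 : Continuous (fun t => t * G t) := by fun_prop
  -- pointwise identity for the integrand
  have hpt : ∀ p : ℝ × ℝ,
      (deriv (fun u => ψ (u, p.2)) p.1 * deriv (fun u => φ (u, p.2)) p.1 / fB n k c p.1 p.2
        + deriv (fun v => ψ (p.1, v)) p.2 * deriv (fun v => φ (p.1, v)) p.2 * fB n k c p.1 p.2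
        - (π / (2 * a)) ^ 2 * ψ p * φ p * fB n k c p.1 p.2)
      = η p.1 * G p.2 - (η p.1 * kc n k c p.1) * (p.2 * G p.2) := by
    rintro ⟨s, t⟩
    simp only
    have e1 : (fun u => ψ (u, t)) = fun u => ζ u * chi1 a t := funext fun u => hψ u t
    have e2 : (fun u => φ (u, t)) = fun u => η u * (t * chi1 a t) := funext fun u => hφ u t
    have e3 : (fun v => ψ (s, v)) = fun v => ζ s * chi1 a v := funext fun v => hψ s v
    have e4 : (fun v => φ (s, v)) = fun v => η s * (v * chi1 a v) := funext fun v => hφ s v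
    have d1 : deriv (fun u => ψ (u, t)) s = deriv ζ s * chi1 a t := by
      rw [e1, deriv_mul_const (hζd s)]
    have d2 : deriv (fun u => φ (u, t)) s = deriv η s * (t * chi1 a t) := by
      rw [e2, deriv_mul_const (hηd s)]
    have d3 : deriv (fun v => ψ (s, v)) t = ζ s * (r * (-Real.sin (m * t) * m)) := by
      rw [e3]; exact ((hchid t).const_mul (ζ s)).deriv
    have d4 : deriv (fun v => φ (s, v)) t
        = η s * (1 * chi1 a t + t * (r * (-Real.sin (m * t) * m))) := by
      rw [e4]; exact (((hasDerivAt_id t).mul (hchid t)).const_mul (η s)).deriv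
    rw [d1, d2, d3, d4, hψ s t, hφ s t]
    have hnum : deriv ζ s * chi1 a t * (deriv η s * (t * chi1 a t)) = 0 := by
      have : deriv ζ s * chi1 a t * (deriv η s * (t * chi1 a t))
          = (deriv ζ s * deriv η s) * (chi1 a t * (t * chi1 a t)) := by ring
      rw [this, hzero s, zero_mul]
    rw [hnum, zero_div, zero_add, hchi t, fB, hGdef]
    rcases hζη s with h | h
    · rw [h]; ring
    · rw [h]; ring
  rw [integral_congr_ae (Eventually.of_forall hpt)]
  -- product structure
  have hmeas : (volume : Measure (ℝ × ℝ)).restrict (strip0 a)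
      = (volume : Measure ℝ).prod ((volume : Measure ℝ).restrict (Ioo (-a) a)) := by
    rw [strip0, MeasureTheory.Measure.volume_eq_prod, ← Measure.prod_restrict, Measure.restrict_univ]
  rw [hmeas]
  -- integrability
  have hηint : Integrable η := hη.continuous.integrable_of_hasCompactSupport hηsupp
  have hκm : Measurable (kc n k c) := by
    unfold kc
    exact Finset.measurable_sum _ (fun j _ => (hkm j).mul_const _)
  have hBint : Integrable (fun s => η s * kc n k c s) := by
    have h1 : Integrable (fun s => kc n k c s * η s) := by
      refine hηint.bdd_mul (c := C) hκm.aestronglyMeasurable ?_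
      filter_upwards [hC] with s hs
      simpa [Real.norm_eq_abs] using hs
    exact h1.congr (Eventually.of_forall fun s => mul_comm _ _)
  have hGIoo : IntegrableOn G (Ioo (-a) a) :=
    (hGcont.integrableOn_Icc).mono_set Set.Ioo_subset_Icc_self
  have htGIoo : IntegrableOn (fun t => t * G t) (Ioo (-a) a) :=
    (hGcont2.integrableOn_Icc).mono_set Set.Ioo_subset_Icc_self
  have hint1 : Integrable (fun p : ℝ × ℝ => η p.1 * G p.2)
      ((volume : Measure ℝ).prod ((volume : Measure ℝ).restrict (Ioo (-a) a))) :=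
    hηint.mul_prod hGIoo
  have hint2 : Integrable (fun p : ℝ × ℝ => (η p.1 * kc n k c p.1) * (p.2 * G p.2))
      ((volume : Measure ℝ).prod ((volume : Measure ℝ).restrict (Ioo (-a) a))) :=
    hBint.mul_prod htGIoo
  rw [integral_sub hint1 hint2]
  have I1 : (∫ p : ℝ × ℝ, η p.1 * G p.2
      ∂((volume : Measure ℝ).prod ((volume : Measure ℝ).restrict (Ioo (-a) a))))
      = (∫ s : ℝ, η s) * ∫ t in Ioo (-a) a, G t := integral_prod_mul η G
  have I2 : (∫ p : ℝ × ℝ, (η p.1 * kc n k c p.1) * (p.2 * G p.2)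
      ∂((volume : Measure ℝ).prod ((volume : Measure ℝ).restrict (Ioo (-a) a))))
      = (∫ s : ℝ, η s * kc n k c s) * ∫ t in Ioo (-a) a, (t * G t) :=
    integral_prod_mul (fun s => η s * kc n k c s) (fun t => t * G t)
  rw [I1, I2]
  -- endpoint values
  have hma : m * a = π / 2 := by rw [hmdef]; field_simp
  have hmna : m * (-a) = -(π / 2) := by rw [mul_neg, hma]
  -- the two transverse integrals
  have hG0 : ∫ t in Ioo (-a) a, G t = 0 := by
    rw [← integral_Ioc_eq_integral_Ioo,
      ← intervalIntegral.integral_of_le (by linarith : (-a : ℝ) ≤ a)]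
    rw [intervalIntegral.integral_eq_sub_of_hasDerivAt
      (fun t _ => hasDerivAt_K r m t) ((by fun_prop : Continuous fun t : ℝ =>
        -(r ^ 2 * m) * (Real.sin (m * t) * Real.cos (m * t))
        + r ^ 2 * m ^ 2 * (t * (Real.sin (m * t) ^ 2 - Real.cos (m * t) ^ 2))).intervalIntegrable _ _)]
    simp [hma, hmna, Real.cos_pi_div_two, Real.sin_pi_div_two]
  have hG1 : ∫ t in Ioo (-a) a, t * G t = 1 / 2 := by
    rw [← integral_Ioc_eq_integral_Ioo,
      ← intervalIntegral.integral_of_le (by linarith : (-a : ℝ) ≤ a)]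
    rw [intervalIntegral.integral_eq_sub_of_hasDerivAt
      (fun t _ => hasDerivAt_H r m (ne_of_gt hm0) t) ((by fun_prop : Continuous fun t : ℝ =>
        t * (-(r ^ 2 * m) * (Real.sin (m * t) * Real.cos (m * t))
        + r ^ 2 * m ^ 2 * (t * (Real.sin (m * t) ^ 2 - Real.cos (m * t) ^ 2)))).intervalIntegrable _ _)]
    simp only [hma, hmna, Real.cos_pi_div_two, Real.sin_pi_div_two, Real.cos_neg, Real.sin_neg]
    ring_nf
    linear_combination hra / 2
  rw [hG0, hG1]
  ring
end
end

section
/- Let J ⊂ ℝ be a compact interval, s₀ ∈ J, and let Ã : J → (n×n real matrices) be measurable and essentially bounded with Ã(s) skew-symmetric for almost every s. Let R₀ be an orthogonal n×n matrix. Then there exists a unique Lipschitz continuous matrix-valued function R : J → (n×n real matrices) satisfying R(s₀) = R₀ and R'(s) + R(s)Ã(s) = 0 for almost every s ∈ J; moreover, R(s) is an orthogonal matrix for every s ∈ J. -/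
/-!
Write the equation as `R' = B(t) R` with the linear coefficient `B(t) X = -X A(t)`, which is
essentially bounded, say `‖B(t)‖ ≤ K`. Solutions are fixed points of the Picard operator
`x ↦ R₀ + ∫_{s₀}^t B(u) x(u) du` on `C([p, q])`, whose `k`-th iterate is
`(K (q - p))^k / k!`-Lipschitz, hence a contraction for large `k`: this gives existence.
Conversely, a Lipschitz function is absolutely continuous, so it is the integral of its a.e.
derivative; hence every Lipschitz a.e. solution is a fixed point, which gives uniqueness.
Finally `R Rᵀ` is Lipschitz with a.e. derivative `-R (A + Aᵀ) Rᵀ = 0`, so it stays `R₀ R₀ᵀ = 1`.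
-/

open MeasureTheory Set Filter Matrix
open scoped NNReal Nat Interval

section Primitive

variable {E : Type*} [NormedAddCommGroup E] [NormedSpace ℝ E] {p q s : ℝ}

theorem ae_restrict_Icc_mem_Ioo : ∀ᵐ t ∂volume.restrict (Icc p q), t ∈ Ioo p q := by
  rw [← Measure.restrict_congr_set Ioo_ae_eq_Icc]
  exact ae_restrict_mem measurableSet_Ioo

variable {g : ℝ → E}

theorem lipschitzOnWith_intervalIntegral {C : ℝ≥0} (hg : IntegrableOn g (Icc p q))
    (hC : ∀ᵐ t ∂volume.restrict (Icc p q), ‖g t‖ ≤ C) (hs : s ∈ Icc p q) :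
    LipschitzOnWith C (fun t => ∫ u in s..t, g u) (Icc p q) := by
  have hint : ∀ {a b}, a ∈ Icc p q → b ∈ Icc p q → IntervalIntegrable g volume a b :=
    fun ha hb => (hg.mono_set (uIcc_subset_Icc ha hb)).intervalIntegrable
  refine LipschitzOnWith.of_dist_le_mul fun x hx y hy => ?_
  rw [dist_eq_norm, intervalIntegral.integral_interval_sub_left (hint hs hx) (hint hs hy),
    Real.dist_eq]
  refine intervalIntegral.norm_integral_le_of_norm_le_const_ae ?_
  filter_upwards [(ae_restrict_iff' measurableSet_Icc).1 hC] with t ht htI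
  exact ht (uIcc_subset_Icc hy hx (uIoc_subset_uIcc htI))

theorem ae_hasDerivAt_intervalIntegral [CompleteSpace E] (hg : IntegrableOn g (Icc p q))
    (hs : s ∈ Icc p q) :
    ∀ᵐ t ∂volume.restrict (Icc p q), HasDerivAt (fun t => ∫ u in s..t, g u) (g t) t := by
  have hpq : p ≤ q := hs.1.trans hs.2
  rw [← uIcc_of_le hpq] at hg hs ⊢
  rw [ae_restrict_iff' measurableSet_uIcc]
  filter_upwards [hg.intervalIntegrable.ae_hasDerivAt_integral] with t ht htI
  exact ht htI s hs

theorem LipschitzOnWith.eq_add_intervalIntegral_of_ae_hasDerivAt [CompleteSpace E] {f : ℝ → E}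
    {L : ℝ≥0} (hf : LipschitzOnWith L f (Icc p q)) (hg : IntegrableOn g (Icc p q))
    (hfg : ∀ᵐ t ∂volume.restrict (Icc p q), HasDerivAt f (g t) t) (hs : s ∈ Icc p q)
    {t : ℝ} (ht : t ∈ Icc p q) : f t = f s + ∫ u in s..t, g u := by
  have hpq : p ≤ q := hs.1.trans hs.2
  -- The a.e. derivative of an `L`-Lipschitz function is bounded by `L`, so `∫ g` is Lipschitz.
  have hgL : ∀ᵐ t ∂volume.restrict (Icc p q), ‖g t‖ ≤ L := by
    filter_upwards [hfg, ae_restrict_Icc_mem_Ioo] with t hft ht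
    exact hft.le_of_lipschitzOn (Icc_mem_nhds ht.1 ht.2) hf
  set h := fun x => f x - ∫ u in s..x, g u
  have hlip : LipschitzOnWith (L + L) h (uIcc p q) := by
    rw [uIcc_of_le hpq]
    exact hf.sub (lipschitzOnWith_intervalIntegral hg hgL hs)
  have hderiv : ∀ᵐ x, x ∈ uIcc p q → HasDerivAt h 0 x := by
    rw [uIcc_of_le hpq, ← ae_restrict_iff' measurableSet_Icc]
    filter_upwards [hfg, ae_hasDerivAt_intervalIntegral hg hs] with x hfx hgx
    rw [← sub_self (g x)]
    exact hfx.sub hgx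
  obtain ⟨C, hC⟩ := hlip.absolutelyContinuousOnInterval.const_of_ae_hasDerivAt_zero hderiv
  rw [uIcc_of_le hpq] at hC
  have hts : h t = h s := (hC t ht).trans (hC s hs).symm
  simp only [h, intervalIntegral.integral_same, sub_zero] at hts
  rw [← hts, sub_add_cancel]

end Primitive

theorem ContinuousLinearMap.lipschitzOnWith_apply₂ {𝕜 α E F G : Type*}
    [NontriviallyNormedField 𝕜] [PseudoMetricSpace α]
    [NormedAddCommGroup E] [NormedSpace 𝕜 E] [NormedAddCommGroup F] [NormedSpace 𝕜 F]
    [NormedAddCommGroup G] [NormedSpace 𝕜 G]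
    (Φ : E →L[𝕜] F →L[𝕜] G) {u : α → E} {v : α → F} {s : Set α} {Ku Kv Cu Cv : ℝ≥0}
    (hu : LipschitzOnWith Ku u s) (hv : LipschitzOnWith Kv v s)
    (hCu : ∀ a ∈ s, ‖u a‖ ≤ Cu) (hCv : ∀ a ∈ s, ‖v a‖ ≤ Cv) :
    LipschitzOnWith (‖Φ‖₊ * (Cu * Kv + Ku * Cv)) (fun a => Φ (u a) (v a)) s := by
  refine LipschitzOnWith.of_dist_le_mul fun a ha b hb => ?_
  have hsplit : Φ (u a) (v a) - Φ (u b) (v b) = Φ (u a) (v a - v b) + Φ (u a - u b) (v b) := by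
    simp only [map_sub, _root_.sub_apply]
    abel
  rw [dist_eq_norm, hsplit]
  calc ‖Φ (u a) (v a - v b) + Φ (u a - u b) (v b)‖
      ≤ ‖Φ‖ * ‖u a‖ * ‖v a - v b‖ + ‖Φ‖ * ‖u a - u b‖ * ‖v b‖ :=
        norm_add_le_of_le (Φ.le_opNorm₂ _ _) (Φ.le_opNorm₂ _ _)
    _ ≤ ‖Φ‖ * Cu * (Kv * dist a b) + ‖Φ‖ * (Ku * dist a b) * Cv := by
        rw [← dist_eq_norm, ← dist_eq_norm]
        gcongr
        exacts [hCu a ha, hv.dist_le_mul a ha b hb, hu.dist_le_mul a ha b hb, hCv b hb]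
    _ = _ := by push_cast; ring

structure AEBoundedOn {F : Type*} [NormedAddCommGroup F] (B : ℝ → F) (K : ℝ≥0) (s : Set ℝ) :
    Prop where
  aestronglyMeasurable : AEStronglyMeasurable B (volume.restrict s)
  ae_norm_le : ∀ᵐ t ∂volume.restrict s, ‖B t‖ ≤ K

namespace LinearODE

variable {E : Type*} [NormedAddCommGroup E] [NormedSpace ℝ E]
  {B : ℝ → E →L[ℝ] E} {K : ℝ≥0} {p q s₀ : ℝ}

theorem ae_norm_apply_le (hB : AEBoundedOn B K (Icc p q)) {x : ℝ → E} {C : ℝ}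
    (hC : ∀ t ∈ Icc p q, ‖x t‖ ≤ C) :
    ∀ᵐ t ∂volume.restrict (Icc p q), ‖B t (x t)‖ ≤ K * C := by
  filter_upwards [hB.ae_norm_le, ae_restrict_mem measurableSet_Icc] with t hBt ht
  exact (B t).le_of_opNorm_le_of_le hBt (hC t ht)

theorem integrableOn_apply (hB : AEBoundedOn B K (Icc p q)) {x : ℝ → E}
    (hx : ContinuousOn x (Icc p q)) : IntegrableOn (fun t => B t (x t)) (Icc p q) := by
  obtain ⟨C, hC⟩ := isCompact_Icc.exists_bound_of_continuousOn hx
  refine Integrable.mono' (integrableOn_const measure_Icc_lt_top.ne) ?_ (ae_norm_apply_le hB hC)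
  exact (ContinuousLinearMap.id ℝ _).aestronglyMeasurable_comp₂ hB.aestronglyMeasurable
    (hx.aestronglyMeasurable measurableSet_Icc)

theorem lipschitzOnWith_picard (hB : AEBoundedOn B K (Icc p q)) (hs₀ : s₀ ∈ Icc p q) (x₀ : E)
    {x : ℝ → E} (hx : ContinuousOn x (Icc p q)) {C : ℝ≥0} (hC : ∀ t ∈ Icc p q, ‖x t‖ ≤ C) :
    LipschitzOnWith (K * C) (ODE.picard (fun t => B t) s₀ x₀ x) (Icc p q) := by
  have h := lipschitzOnWith_intervalIntegral (C := K * C) (integrableOn_apply hB hx)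
    (by exact_mod_cast ae_norm_apply_le hB hC) hs₀
  have h' := (LipschitzWith.const x₀).lipschitzOnWith.add h
  rw [zero_add] at h'
  exact h'

noncomputable def picardOp (hB : AEBoundedOn B K (Icc p q)) (hs₀ : s₀ ∈ Icc p q) (x₀ : E)
    (x : C(Icc p q, E)) : C(Icc p q, E) where
  toFun t := ODE.picard (fun t => B t) s₀ x₀ (IccExtend (hs₀.1.trans hs₀.2) x) t
  continuous_toFun := by
    have hx : Continuous (IccExtend (hs₀.1.trans hs₀.2) x) :=
      continuous_IccExtend_iff.2 x.continuous
    exact (lipschitzOnWith_picard hB hs₀ x₀ hx.continuousOn (C := ‖x‖₊)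
      fun _ _ => x.norm_coe_le_norm _).continuousOn.domRestrict

theorem picardOp_apply (hB : AEBoundedOn B K (Icc p q)) (hs₀ : s₀ ∈ Icc p q) (x₀ : E)
    (x : C(Icc p q, E)) (t : Icc p q) :
    picardOp hB hs₀ x₀ x t = x₀ + ∫ u in s₀..t, B u (IccExtend (hs₀.1.trans hs₀.2) x u) :=
  rfl

theorem norm_picardOp_iterate_sub_le (hB : AEBoundedOn B K (Icc p q)) (hs₀ : s₀ ∈ Icc p q)
    (x₀ : E) (x y : C(Icc p q, E)) (k : ℕ) (t : Icc p q) :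
    ‖(picardOp hB hs₀ x₀)^[k] x t - (picardOp hB hs₀ x₀)^[k] y t‖ ≤
      (K * |(t : ℝ) - s₀|) ^ k / k ! * dist x y := by
  have hpq : p ≤ q := hs₀.1.trans hs₀.2
  induction k generalizing t with
  | zero => simpa [dist_eq_norm] using ContinuousMap.dist_apply_le_dist (f := x) (g := y) t
  | succ k ih =>
    set T := picardOp hB hs₀ x₀
    set X := IccExtend hpq (T^[k] x)
    set Y := IccExtend hpq (T^[k] y)
    have hI : Ι s₀ t ⊆ Icc p q := uIoc_subset_uIcc.trans (uIcc_subset_Icc hs₀ t.2)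
    have hint (z : C(Icc p q, E)) :
        IntervalIntegrable (fun u => B u (IccExtend hpq z u)) volume s₀ t :=
      ((integrableOn_apply hB (continuous_IccExtend_iff.2 z.continuous).continuousOn).mono_set
        (uIcc_subset_Icc hs₀ t.2)).intervalIntegrable
    have hbound : ∀ᵐ u ∂volume.restrict (Ι s₀ t),
        ‖B u (X u) - B u (Y u)‖ ≤ (K ^ (k + 1) / k ! * dist x y) * |u - s₀| ^ k := by
      filter_upwards [ae_restrict_of_ae_restrict_of_subset hI hB.ae_norm_le,
        ae_restrict_mem measurableSet_uIoc] with u hBu hu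
      rw [← map_sub]
      calc ‖B u (X u - Y u)‖ ≤ K * ((K * |u - s₀|) ^ k / k ! * dist x y) := by
            refine (B u).le_of_opNorm_le_of_le hBu ?_
            simpa [X, Y, IccExtend_of_mem _ _ (hI hu)] using ih ⟨u, hI hu⟩
        _ = (K ^ (k + 1) / k ! * dist x y) * |u - s₀| ^ k := by ring
    calc ‖T^[k + 1] x t - T^[k + 1] y t‖ = ‖∫ u in s₀..t, (B u (X u) - B u (Y u))‖ := by
          rw [Function.iterate_succ_apply', Function.iterate_succ_apply', picardOp_apply,
            picardOp_apply, add_sub_add_left_eq_sub,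
            intervalIntegral.integral_sub (hint _) (hint _)]
      _ ≤ ∫ u in Ι s₀ t, (K ^ (k + 1) / k ! * dist x y) * |u - s₀| ^ k := by
          rw [intervalIntegral.norm_intervalIntegral_eq]
          exact norm_integral_le_of_norm_le (Continuous.integrableOn_uIoc (by fun_prop)) hbound
      _ = (K * |(t : ℝ) - s₀|) ^ (k + 1) / (k + 1) ! * dist x y := by
          rw [integral_const_mul, integral_pow_abs_sub_uIoc, Nat.factorial_succ]
          push_cast
          field_simp
          ring

theorem exists_contractingWith_picardOp_iterate (hB : AEBoundedOn B K (Icc p q))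
    (hs₀ : s₀ ∈ Icc p q) (x₀ : E) :
    ∃ (k : ℕ) (C : ℝ≥0), ContractingWith C (picardOp hB hs₀ x₀)^[k] := by
  have hqp : 0 ≤ q - p := sub_nonneg.2 (hs₀.1.trans hs₀.2)
  obtain ⟨k, hk⟩ := ((FloorSemiring.tendsto_pow_div_factorial_atTop (K * (q - p))).eventually
    (gt_mem_nhds one_pos)).exists
  have hk₀ : 0 ≤ (K * (q - p)) ^ k / k ! := by positivity
  refine ⟨k, ⟨_, hk₀⟩, hk, LipschitzWith.of_dist_le_mul fun x y => ?_⟩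
  change dist _ _ ≤ (K * (q - p)) ^ k / k ! * dist x y
  refine (ContinuousMap.dist_le (by positivity)).2 fun t => ?_
  rw [dist_eq_norm]
  refine (norm_picardOp_iterate_sub_le hB hs₀ x₀ x y k t).trans ?_
  have ht : |(t : ℝ) - s₀| ≤ q - p :=
    abs_sub_le_iff.2 ⟨by linarith [t.2.2, hs₀.1], by linarith [t.2.1, hs₀.2]⟩
  gcongr

theorem apply₂_self_eq_of_ae_hasDerivAt {G : Type*} [NormedAddCommGroup G] [NormedSpace ℝ G]
    [CompleteSpace G] (Φ : E →L[ℝ] E →L[ℝ] G)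
    (hΦ : ∀ᵐ t ∂volume.restrict (Icc p q), ∀ v w, Φ (B t v) w + Φ v (B t w) = 0)
    {x : ℝ → E} {L : ℝ≥0} (hx : LipschitzOnWith L x (Icc p q))
    (hxd : ∀ᵐ t ∂volume.restrict (Icc p q), HasDerivAt x (B t (x t)) t) (hs₀ : s₀ ∈ Icc p q)
    {t : ℝ} (ht : t ∈ Icc p q) : Φ (x t) (x t) = Φ (x s₀) (x s₀) := by
  obtain ⟨C, hC⟩ := isCompact_Icc.exists_bound_of_continuousOn hx.continuousOn
  have hC' : ∀ t ∈ Icc p q, ‖x t‖ ≤ C.toNNReal := fun t ht => (hC t ht).trans C.le_coe_toNNReal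
  have hd : ∀ᵐ t ∂volume.restrict (Icc p q), HasDerivAt (fun t => Φ (x t) (x t)) (0 : G) t := by
    filter_upwards [hxd, hΦ] with t hxt hΦt
    have h := Φ.hasDerivAt_of_bilinear (fun _ => hxt) (fun _ => hxt)
    rwa [add_comm, hΦt] at h
  simpa using (Φ.lipschitzOnWith_apply₂ hx hx hC' hC').eq_add_intervalIntegral_of_ae_hasDerivAt
    (g := fun _ => 0) integrableOn_zero hd hs₀ ht

variable [CompleteSpace E]

theorem isFixedPt_picardOp (hB : AEBoundedOn B K (Icc p q)) (hs₀ : s₀ ∈ Icc p q) {x : ℝ → E}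
    {L : ℝ≥0} (hx : LipschitzOnWith L x (Icc p q))
    (hxd : ∀ᵐ t ∂volume.restrict (Icc p q), HasDerivAt x (B t (x t)) t) :
    Function.IsFixedPt (picardOp hB hs₀ (x s₀)) ⟨fun t => x t, hx.continuousOn.domRestrict⟩ := by
  ext t
  change _ = x t
  rw [picardOp_apply, hx.eq_add_intervalIntegral_of_ae_hasDerivAt
    (integrableOn_apply hB hx.continuousOn) hxd hs₀ t.2]
  congr 1
  refine intervalIntegral.integral_congr fun u hu => ?_
  rw [IccExtend_of_mem _ _ (uIcc_subset_Icc hs₀ t.2 hu)]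
  rfl

theorem eqOn_of_ae_hasDerivAt (hB : AEBoundedOn B K (Icc p q)) (hs₀ : s₀ ∈ Icc p q)
    {x y : ℝ → E} {Lx Ly : ℝ≥0} (hx : LipschitzOnWith Lx x (Icc p q))
    (hy : LipschitzOnWith Ly y (Icc p q))
    (hxd : ∀ᵐ t ∂volume.restrict (Icc p q), HasDerivAt x (B t (x t)) t)
    (hyd : ∀ᵐ t ∂volume.restrict (Icc p q), HasDerivAt y (B t (y t)) t) (h₀ : x s₀ = y s₀) :
    EqOn x y (Icc p q) := by
  obtain ⟨k, C, hk⟩ := exists_contractingWith_picardOp_iterate hB hs₀ (x s₀)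
  have hyfix := isFixedPt_picardOp hB hs₀ hy hyd
  rw [← h₀] at hyfix
  have hxy := hk.fixedPoint_unique' ((isFixedPt_picardOp hB hs₀ hx hxd).iterate k)
    (hyfix.iterate k)
  exact fun t ht => DFunLike.congr_fun hxy ⟨t, ht⟩

theorem exists_lipschitzOnWith_ae_hasDerivAt (hB : AEBoundedOn B K (Icc p q))
    (hs₀ : s₀ ∈ Icc p q) (x₀ : E) :
    ∃ x : ℝ → E, (∃ L, LipschitzOnWith L x (Icc p q)) ∧ x s₀ = x₀ ∧
      ∀ᵐ t ∂volume.restrict (Icc p q), HasDerivAt x (B t (x t)) t := by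
  have hpq : p ≤ q := hs₀.1.trans hs₀.2
  obtain ⟨k, C, hk⟩ := exists_contractingWith_picardOp_iterate hB hs₀ x₀
  set x := hk.fixedPoint (picardOp hB hs₀ x₀)^[k]
  have hx : Function.IsFixedPt (picardOp hB hs₀ x₀) x := hk.isFixedPt_fixedPoint_iterate
  have hcont : Continuous (IccExtend hpq x) := continuous_IccExtend_iff.2 x.continuous
  have hxeq : EqOn (ODE.picard (fun t => B t) s₀ x₀ (IccExtend hpq x)) (IccExtend hpq x)
      (Icc p q) := fun t ht => by
    rw [IccExtend_of_mem _ _ ht]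
    exact DFunLike.congr_fun hx ⟨t, ht⟩
  refine ⟨ODE.picard (fun t => B t) s₀ x₀ (IccExtend hpq x),
    ⟨_, lipschitzOnWith_picard hB hs₀ x₀ hcont.continuousOn (C := ‖x‖₊)
      fun _ _ => x.norm_coe_le_norm _⟩, ODE.picard_apply₀, ?_⟩
  filter_upwards [ae_hasDerivAt_intervalIntegral (integrableOn_apply hB hcont.continuousOn) hs₀,
    ae_restrict_mem measurableSet_Icc] with t ht htI
  rw [hxeq htI]
  exact ht.const_add x₀

end LinearODE

section LinftyOpNorm

/- The `L∞` operator norm makes square matrices a Banach algebra, and it induces the product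
topology, so derivatives of matrix-valued functions can be read off entrywise. -/
attribute [local instance] Matrix.linftyOpNormedAddCommGroup Matrix.linftyOpNormedSpace
  Matrix.linftyOpNormedRing Matrix.linftyOpNormedAlgebra

namespace Matrix

theorem hasDerivAt_iff_forall_entry {m n : Type*} [Fintype n] {f : ℝ → Matrix m n ℝ}
    {f' : Matrix m n ℝ} {t : ℝ} :
    HasDerivAt f f' t ↔ ∀ i j, HasDerivAt (fun u => f u i j) (f' i j) t :=
  ⟨fun h i j => hasDerivAt_pi.1 (hasDerivAt_pi.1 h i) j,
    fun h => hasDerivAt_pi.2 fun i => hasDerivAt_pi.2 fun j => h i j⟩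

variable {α m n : Type*} [Fintype m] [Fintype n] [NormedAddCommGroup α]

theorem norm_entry_le_linfty_opNorm (X : Matrix m n α) (i : m) (j : n) : ‖X i j‖ ≤ ‖X‖ := by
  rw [linfty_opNorm_def]
  calc ‖X i j‖ ≤ ∑ k, ‖X i k‖ :=
        Finset.single_le_sum (fun k _ => norm_nonneg (X i k)) (Finset.mem_univ j)
    _ = ((∑ k, ‖X i k‖₊ : ℝ≥0) : ℝ) := by push_cast; rfl
    _ ≤ _ := by exact_mod_cast Finset.le_sup (f := fun i => ∑ k, ‖X i k‖₊) (Finset.mem_univ i)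

theorem linfty_opNorm_le_of_forall_entry_le {X : Matrix m n α} {C : ℝ} (hC : 0 ≤ C)
    (h : ∀ i j, ‖X i j‖ ≤ C) : ‖X‖ ≤ Fintype.card n * C := by
  lift C to ℝ≥0 using hC
  have h' : ∀ i j, ‖X i j‖₊ ≤ C := fun i j => by exact_mod_cast h i j
  rw [linfty_opNorm_def]
  exact_mod_cast Finset.sup_le fun i _ =>
    (Finset.sum_le_sum fun j _ => h' i j).trans_eq (by simp)

theorem exists_lipschitzOnWith_iff {β : Type*} [PseudoMetricSpace β] {f : β → Matrix m n α}
    {s : Set β} :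
    (∃ K, LipschitzOnWith K f s) ↔ ∃ K, ∀ i j, LipschitzOnWith K (fun b => f b i j) s := by
  constructor
  · rintro ⟨K, hK⟩
    refine ⟨K, fun i j => LipschitzOnWith.of_dist_le_mul fun a ha b hb => ?_⟩
    rw [dist_eq_norm, ← sub_apply]
    exact (norm_entry_le_linfty_opNorm _ i j).trans
      (dist_eq_norm (f a) (f b) ▸ hK.dist_le_mul a ha b hb)
  · rintro ⟨K, hK⟩
    refine ⟨Fintype.card n * K, LipschitzOnWith.of_dist_le_mul fun a ha b hb => ?_⟩
    rw [dist_eq_norm, NNReal.coe_mul, NNReal.coe_natCast, mul_assoc]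
    refine linfty_opNorm_le_of_forall_entry_le (by positivity) fun i j => ?_
    rw [sub_apply, ← dist_eq_norm]
    exact (hK i j).dist_le_mul a ha b hb

variable {A : ℝ → Matrix n n ℝ} {p q s₀ : ℝ}

theorem hasDerivAt_neg_mul_iff {R : ℝ → Matrix n n ℝ} {t : ℝ} :
    HasDerivAt R (-(R t * A t)) t ↔
      ∀ i j, HasDerivAt (fun u => R u i j) (-(∑ l, R t i l * A t l j)) t := by
  simp [hasDerivAt_iff_forall_entry, mul_apply]

variable [DecidableEq n]

theorem aeBoundedOn_neg_mulRight (hmeas : ∀ i j, Measurable fun s => A s i j) {M : ℝ}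
    (hM : ∀ᵐ s ∂volume.restrict (Icc p q), ∀ i j, |A s i j| ≤ M) :
    AEBoundedOn (fun t => -(ContinuousLinearMap.mul ℝ (Matrix n n ℝ)).flip (A t))
      (Fintype.card n * M.toNNReal) (Icc p q) := by
  constructor
  · -- `Matrix` carries no `MeasurableSpace` instance, so measure `A` as a map into `n → n → ℝ`.
    have hA : Measurable (show ℝ → n → n → ℝ from A) :=
      measurable_pi_lambda _ fun i => measurable_pi_lambda _ (hmeas i)
    exact (-(ContinuousLinearMap.mul ℝ (Matrix n n ℝ)).flip).continuous.comp_aestronglyMeasurable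
      hA.aestronglyMeasurable
  · filter_upwards [hM] with t ht
    rw [norm_neg]
    refine ((ContinuousLinearMap.mul ℝ (Matrix n n ℝ)).flip.le_opNorm (A t)).trans ?_
    rw [ContinuousLinearMap.opNorm_flip]
    refine (mul_le_of_le_one_left (norm_nonneg _) (ContinuousLinearMap.opNorm_mul_le _ _)).trans ?_
    push_cast
    exact linfty_opNorm_le_of_forall_entry_le (by positivity) fun i j =>
      (ht i j).trans M.le_coe_toNNReal

theorem mul_transpose_self_eq_of_ae_hasDerivAt
    (hskew : ∀ᵐ s ∂volume.restrict (Icc p q), (A s)ᵀ = -A s) {R : ℝ → Matrix n n ℝ} {L : ℝ≥0}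
    (hR : LipschitzOnWith L R (Icc p q))
    (hRd : ∀ᵐ t ∂volume.restrict (Icc p q), HasDerivAt R (-(R t * A t)) t) (hs₀ : s₀ ∈ Icc p q)
    {t : ℝ} (ht : t ∈ Icc p q) : R t * (R t)ᵀ = R s₀ * (R s₀)ᵀ := by
  set Φ := (ContinuousLinearMap.mul ℝ (Matrix n n ℝ)).bilinearComp (ContinuousLinearMap.id ℝ _)
    (starL' ℝ : Matrix n n ℝ ≃L[ℝ] Matrix n n ℝ).toContinuousLinearMap
  have hΦ_apply (X Y : Matrix n n ℝ) : Φ X Y = X * Yᵀ := by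
    rw [← conjTranspose_eq_transpose_of_trivial, ← star_eq_conjTranspose]
    rfl
  have hΦ : ∀ᵐ t ∂volume.restrict (Icc p q), ∀ v w,
      Φ ((-(ContinuousLinearMap.mul ℝ (Matrix n n ℝ)).flip (A t)) v) w +
        Φ v ((-(ContinuousLinearMap.mul ℝ (Matrix n n ℝ)).flip (A t)) w) = 0 := by
    filter_upwards [hskew] with t ht v w
    simp [hΦ_apply, transpose_mul, ht, Matrix.mul_assoc]
  simpa only [hΦ_apply] using LinearODE.apply₂_self_eq_of_ae_hasDerivAt Φ hΦ hR hRd hs₀ ht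

theorem exists_lipschitz_orthogonal_solution (hmeas : ∀ i j, Measurable fun s => A s i j)
    {M : ℝ} (hM : ∀ᵐ s ∂volume.restrict (Icc p q), ∀ i j, |A s i j| ≤ M)
    (hskew : ∀ᵐ s ∂volume.restrict (Icc p q), (A s)ᵀ = -A s) (hs₀ : s₀ ∈ Icc p q)
    {R₀ : Matrix n n ℝ} (hR₀ : R₀ᵀ * R₀ = 1) :
    ∃ R : ℝ → Matrix n n ℝ, (∃ L : ℝ≥0, ∀ i j, LipschitzOnWith L (fun s => R s i j) (Icc p q)) ∧
      R s₀ = R₀ ∧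
      (∀ᵐ s ∂volume.restrict (Icc p q),
        ∀ i j, HasDerivAt (fun u => R u i j) (-(∑ l, R s i l * A s l j)) s) ∧
      ∀ s ∈ Icc p q, (R s)ᵀ * R s = 1 := by
  obtain ⟨R, ⟨L, hL⟩, hRs₀, hRd⟩ :=
    LinearODE.exists_lipschitzOnWith_ae_hasDerivAt (aeBoundedOn_neg_mulRight hmeas hM) hs₀ R₀
  refine ⟨R, exists_lipschitzOnWith_iff.1 ⟨L, hL⟩, hRs₀,
    hRd.mono fun t => hasDerivAt_neg_mul_iff.1, fun t ht => mul_eq_one_comm.1 ?_⟩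
  rw [mul_transpose_self_eq_of_ae_hasDerivAt hskew hL hRd hs₀ ht, hRs₀, mul_eq_one_comm.1 hR₀]

theorem eqOn_of_lipschitz_solution (hmeas : ∀ i j, Measurable fun s => A s i j) {M : ℝ}
    (hM : ∀ᵐ s ∂volume.restrict (Icc p q), ∀ i j, |A s i j| ≤ M) (hs₀ : s₀ ∈ Icc p q)
    {R R' : ℝ → Matrix n n ℝ}
    (hR : ∃ L : ℝ≥0, ∀ i j, LipschitzOnWith L (fun s => R s i j) (Icc p q))
    (hR' : ∃ L : ℝ≥0, ∀ i j, LipschitzOnWith L (fun s => R' s i j) (Icc p q))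
    (hRd : ∀ᵐ s ∂volume.restrict (Icc p q),
      ∀ i j, HasDerivAt (fun u => R u i j) (-(∑ l, R s i l * A s l j)) s)
    (hR'd : ∀ᵐ s ∂volume.restrict (Icc p q),
      ∀ i j, HasDerivAt (fun u => R' u i j) (-(∑ l, R' s i l * A s l j)) s)
    (h₀ : R s₀ = R' s₀) : EqOn R R' (Icc p q) := by
  obtain ⟨L, hL⟩ := exists_lipschitzOnWith_iff.2 hR
  obtain ⟨L', hL'⟩ := exists_lipschitzOnWith_iff.2 hR'
  exact LinearODE.eqOn_of_ae_hasDerivAt (aeBoundedOn_neg_mulRight hmeas hM) hs₀ hL hL'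
    (hRd.mono fun t => hasDerivAt_neg_mul_iff.2) (hR'd.mono fun t => hasDerivAt_neg_mul_iff.2) h₀

end Matrix

end LinftyOpNorm

theorem skew_linear_ode_orthogonal_solution_general
    (n : ℕ) (p q : ℝ) (s₀ : ℝ) (hs₀ : s₀ ∈ Icc p q)
    (A : ℝ → Matrix (Fin n) (Fin n) ℝ)
    (hmeas : ∀ i j, Measurable fun s => A s i j)
    (hbdd : ∃ M : ℝ, ∀ᵐ s ∂((volume : Measure ℝ).restrict (Icc p q)),
      ∀ i j, |A s i j| ≤ M)
    (hskew : ∀ᵐ s ∂((volume : Measure ℝ).restrict (Icc p q)), (A s)ᵀ = -A s)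
    (R₀ : Matrix (Fin n) (Fin n) ℝ) (hR₀ : R₀ᵀ * R₀ = 1) :
    ∃ R : ℝ → Matrix (Fin n) (Fin n) ℝ,
      ((∃ L : NNReal, ∀ i j, LipschitzOnWith L (fun s => R s i j) (Icc p q)) ∧
        R s₀ = R₀ ∧
        (∀ᵐ s ∂((volume : Measure ℝ).restrict (Icc p q)),
          ∀ i j, HasDerivAt (fun u => R u i j) (-(∑ l, R s i l * A s l j)) s) ∧
        (∀ s ∈ Icc p q, (R s)ᵀ * R s = 1)) ∧
      ∀ R' : ℝ → Matrix (Fin n) (Fin n) ℝ,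
        ((∃ L : NNReal, ∀ i j, LipschitzOnWith L (fun s => R' s i j) (Icc p q)) ∧
          R' s₀ = R₀ ∧
          (∀ᵐ s ∂((volume : Measure ℝ).restrict (Icc p q)),
            ∀ i j, HasDerivAt (fun u => R' u i j) (-(∑ l, R' s i l * A s l j)) s)) →
        ∀ s ∈ Icc p q, R' s = R s := by
  obtain ⟨M, hM⟩ := hbdd
  obtain ⟨R, hRL, hRs₀, hRd, hRorth⟩ :=
    Matrix.exists_lipschitz_orthogonal_solution hmeas hM hskew hs₀ hR₀
  refine ⟨R, ⟨hRL, hRs₀, hRd, hRorth⟩, fun R' ⟨hR'L, hR's₀, hR'd⟩ =>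
    Matrix.eqOn_of_lipschitz_solution hmeas hM hs₀ hR'L hRL hR'd hRd (hR's₀.trans hRs₀.symm)⟩

/-- The linear ODE `R' + R Ã = 0` with skew-symmetric, essentially bounded,
measurable coefficient matrix `Ã` has a unique Lipschitz solution with prescribed orthogonal
initial datum, and this solution is orthogonal at every point. -/
theorem skew_linear_ode_orthogonal_solution
    (n : ℕ) (p q : ℝ) (hpq : p ≤ q) (s₀ : ℝ) (hs₀ : s₀ ∈ Icc p q)
    (A : ℝ → Matrix (Fin n) (Fin n) ℝ)
    (hmeas : ∀ i j, Measurable fun s => A s i j)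
    (hbdd : ∃ M : ℝ, ∀ᵐ s ∂((volume : Measure ℝ).restrict (Icc p q)),
      ∀ i j, |A s i j| ≤ M)
    (hskew : ∀ᵐ s ∂((volume : Measure ℝ).restrict (Icc p q)), (A s)ᵀ = -A s)
    (R₀ : Matrix (Fin n) (Fin n) ℝ) (hR₀ : R₀ᵀ * R₀ = 1) :
    ∃ R : ℝ → Matrix (Fin n) (Fin n) ℝ,
      ((∃ L : NNReal, ∀ i j, LipschitzOnWith L (fun s => R s i j) (Icc p q)) ∧
        R s₀ = R₀ ∧
        (∀ᵐ s ∂((volume : Measure ℝ).restrict (Icc p q)),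
          ∀ i j, HasDerivAt (fun u => R u i j) (-(∑ l, R s i l * A s l j)) s) ∧
        (∀ s ∈ Icc p q, (R s)ᵀ * R s = 1)) ∧
      ∀ R' : ℝ → Matrix (Fin n) (Fin n) ℝ,
        ((∃ L : NNReal, ∀ i j, LipschitzOnWith L (fun s => R' s i j) (Icc p q)) ∧
          R' s₀ = R₀ ∧
          (∀ᵐ s ∂((volume : Measure ℝ).restrict (Icc p q)),
            ∀ i j, HasDerivAt (fun u => R' u i j) (-(∑ l, R' s i l * A s l j)) s)) →
        ∀ s ∈ Icc p q, R' s = R s :=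
  skew_linear_ode_orthogonal_solution_general n p q s₀ hs₀ A hmeas hbdd hskew R₀ hR₀
end
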